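/- arXiv:1103.1028 — 5 statements merged into one kernel-verified Lean document; each statement's English description precedes it below -/
import Mathlib

section
/- If G is a nontrivial connected triangle-free graph (a connected simple graph with at least two vertices and no triangles), then the competition number of G equals the dimension of the hole space of G plus one, i.e., k(G) = dim H(G) + 1. -/
open SimpleGraph

/-- A digraph (given as a relation) is acyclic if it has no directed cycle,
i.e., no vertex reaches itself by a nonempty directed walk. -/
def DigraphAcyclic {α : Type*} (D : α → α → Prop) : Prop :=
  ∀ a : α, ¬ Relation.TransGen D a a

/-- `G` is the competition graph of the digraph `D`: two distinct vertices are
adjacent iff they have a common out-neighbor. -/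
def IsCompetitionGraphOf {α : Type*} (G : SimpleGraph α) (D : α → α → Prop) : Prop :=
  ∀ x y : α, G.Adj x y ↔ x ≠ y ∧ ∃ v : α, D x v ∧ D y v

/-- The graph `G` together with `k` additional isolated vertices. -/
def addIsolated {V : Type*} (G : SimpleGraph V) (k : ℕ) : SimpleGraph (V ⊕ Fin k) :=
  SimpleGraph.fromRel (fun x y => ∃ a b : V, x = Sum.inl a ∧ y = Sum.inl b ∧ G.Adj a b)

/-- The competition number of `G`: the smallest `k` such that `G` together with
`k` isolated vertices is the competition graph of some acyclic digraph. -/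
noncomputable def competitionNumber {V : Type*} (G : SimpleGraph V) : ℕ :=
  sInf {k : ℕ | ∃ D : (V ⊕ Fin k) → (V ⊕ Fin k) → Prop,
    DigraphAcyclic D ∧ IsCompetitionGraphOf (addIsolated G k) D}

/-- A hole of `G`: an induced (chordless) cycle of length at least 4. -/
def IsHole {V : Type*} (G : SimpleGraph V) {v : V} (w : G.Walk v v) : Prop :=
  w.IsCycle ∧ 4 ≤ w.length ∧
    ∀ x y : V, x ∈ w.support → y ∈ w.support → G.Adj x y → s(x, y) ∈ w.edges

/-- An induced (chordless) cycle of `G`. -/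
def IsInducedCycle {V : Type*} (G : SimpleGraph V) {v : V} (w : G.Walk v v) : Prop :=
  w.IsCycle ∧
    ∀ x y : V, x ∈ w.support → y ∈ w.support → G.Adj x y → s(x, y) ∈ w.edges

open Classical in
/-- The characteristic vector in 𝔽₂^{E(G)} of (the edge set of) a closed walk. -/
noncomputable def cycleVec {V : Type*} (G : SimpleGraph V) {H : SimpleGraph V} {v : V}
    (w : H.Walk v v) : G.edgeSet → ZMod 2 :=
  fun e => if (e : Sym2 V) ∈ w.edges then 1 else 0

/-- The hole space of `G`: the 𝔽₂-span of the characteristic vectors of the holes. -/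
def holeSpace {V : Type*} (G : SimpleGraph V) : Submodule (ZMod 2) (G.edgeSet → ZMod 2) :=
  Submodule.span (ZMod 2)
    {f | ∃ (v : V) (w : G.Walk v v), IsHole G w ∧ f = cycleVec G w}

/-- The dimension of the hole space of `G`. -/
noncomputable def holeDim {V : Type*} (G : SimpleGraph V) : ℕ :=
  Module.finrank (ZMod 2) (holeSpace G)

/-- The edge sets of the holes of `G`; distinct holes correspond to distinct edge sets. -/
def holeEdgeSets {V : Type*} (G : SimpleGraph V) : Set (Set (Sym2 V)) :=
  {E | ∃ (v : V) (w : G.Walk v v), IsHole G w ∧ E = {e | e ∈ w.edges}}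

/-- The edge sets of the induced cycles of `G`. -/
def inducedCycleEdgeSets {V : Type*} (G : SimpleGraph V) : Set (Set (Sym2 V)) :=
  {E | ∃ (v : V) (w : G.Walk v v), IsInducedCycle G w ∧ E = {e | e ∈ w.edges}}

/-- The number of holes of `G`. -/
noncomputable def numHoles {V : Type*} (G : SimpleGraph V) : ℕ :=
  (holeEdgeSets G).ncard

/-- A graph is chordal if it has no holes. -/
def IsChordalGraph {V : Type*} (G : SimpleGraph V) : Prop :=
  ∀ (v : V) (w : G.Walk v v), ¬ IsHole G w


/-!
Over `𝔽₂`, the cycles of `G` span exactly the kernel of the boundary map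
`𝔽₂^E → 𝔽₂^V`, `ab ↦ a + b`: a nonzero kernel element has even degree everywhere on its support,
so the support contains a cycle, which can be subtracted. A cycle with a chord is the sum of two
shorter cycles, and a chordless cycle in a triangle-free graph is a hole, so `H(G)` is the whole
kernel. For connected `G` the image of the boundary map is the hyperplane of sum-zero vectors,
hence `dim H(G) = |E| - |V| + 1`.

For the competition number, the first two vertices of a topological order of an acyclic digraph
have at most one in-neighbour, so neither is a common prey. In a triangle-free graph the
in-neighbourhood of a vertex is a clique, so distinct edges have distinct common prey; this gives
`|E| ≤ |V| + k - 2`. Conversely, list the vertices so that each one after the first has an earlier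
neighbour; the edge from the `i`-th vertex to that neighbour preys on the `(i+1)`-st vertex, and
each of the remaining `|E| - |V| + 2` edges preys on its own isolated vertex.
-/

open Function Sum

namespace SimpleGraph

open LinearMap Module

variable {V : Type*} {G : SimpleGraph V}

section Boundary

variable [DecidableEq V]

def edgeBoundary (e : Sym2 V) : V → ZMod 2 :=
  Sym2.lift ⟨fun a b => Pi.single a 1 + Pi.single b 1, fun _ _ => add_comm _ _⟩ e

@[simp]
lemma edgeBoundary_mk (a b : V) : edgeBoundary s(a, b) = Pi.single a 1 + Pi.single b 1 := rfl

lemma edgeBoundary_apply_of_notMem {e : Sym2 V} {v : V} (hv : v ∉ e) : edgeBoundary e v = 0 := by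
  induction e using Sym2.ind with
  | _ a b =>
    rw [Sym2.mem_iff, not_or] at hv
    simp [hv.1, hv.2]

lemma edgeBoundary_apply_of_mem {e : Sym2 V} {v : V} (hv : v ∈ e) (he : ¬ e.IsDiag) :
    edgeBoundary e v = 1 := by
  induction e using Sym2.ind with
  | _ a b =>
    rw [Sym2.mk_isDiag_iff] at he
    rcases Sym2.mem_iff.mp hv with rfl | rfl <;> simp [he, Ne.symm he]

lemma sum_edgeBoundary [Fintype V] (e : Sym2 V) : ∑ v, edgeBoundary e v = 0 := by
  induction e using Sym2.ind with
  | _ a b => simp [Finset.sum_add_distrib, ZModModule.add_self]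

variable (G) [Fintype G.edgeSet]

def boundary : (G.edgeSet → ZMod 2) →ₗ[ZMod 2] V → ZMod 2 :=
  Fintype.linearCombination (ZMod 2) fun e => edgeBoundary (e : Sym2 V)

variable {G}

lemma boundary_apply (f : G.edgeSet → ZMod 2) (v : V) :
    G.boundary f v = ∑ e, f e * edgeBoundary (e : Sym2 V) v := by
  simp [boundary, Fintype.linearCombination_apply, Finset.sum_apply]

lemma boundary_single {a b : V} (h : G.Adj a b) :
    G.boundary (Pi.single ⟨s(a, b), h⟩ 1) = Pi.single a 1 + Pi.single b 1 := by
  simp [boundary, Fintype.linearCombination_apply_single]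

end Boundary

open Classical in
noncomputable def Walk.charVec {u v : V} (p : G.Walk u v) : G.edgeSet → ZMod 2 :=
  fun e => if (e : Sym2 V) ∈ p.edges then 1 else 0

lemma cycleVec_eq_charVec {v : V} (c : G.Walk v v) : cycleVec G c = c.charVec := rfl

namespace Walk

variable {u v w x y : V}

@[simp]
lemma charVec_nil : (nil : G.Walk u u).charVec = 0 := by
  funext e
  simp [charVec]

lemma charVec_apply_of_mem {p : G.Walk u v} {e : G.edgeSet} (he : (e : Sym2 V) ∈ p.edges) :
    p.charVec e = 1 := by
  simp [charVec, he]

lemma charVec_apply_of_notMem {p : G.Walk u v} {e : G.edgeSet} (he : (e : Sym2 V) ∉ p.edges) :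
    p.charVec e = 0 := by
  simp [charVec, he]

lemma charVec_append {p : G.Walk u v} {q : G.Walk v w} (hpq : p.edges.Disjoint q.edges) :
    (p.append q).charVec = p.charVec + q.charVec := by
  funext e
  by_cases hp : (e : Sym2 V) ∈ p.edges
  · have hq : (e : Sym2 V) ∉ q.edges := fun hq => hpq hp hq
    simp [charVec, hp, hq]
  · by_cases hq : (e : Sym2 V) ∈ q.edges <;> simp [charVec, hp, hq]

lemma charVec_cons [DecidableEq V] (h : G.Adj u v) {p : G.Walk v w} (hp : s(u, v) ∉ p.edges) :
    (cons h p).charVec = Pi.single ⟨s(u, v), h⟩ 1 + p.charVec := by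
  funext e
  by_cases he : e = ⟨s(u, v), h⟩
  · subst he
    simp [charVec, hp]
  · have he' : (e : Sym2 V) ≠ s(u, v) := fun h' => he (Subtype.ext h')
    simp [charVec, he, he']

lemma charVec_rotate [DecidableEq V] {c : G.Walk v v} (hu : u ∈ c.support) :
    (c.rotate u hu).charVec = c.charVec := by
  funext e
  simp [charVec, (c.rotate_edges u hu).mem_iff]

lemma two_le_length_of_ne_of_notMem_edges {p : G.Walk u v} (huv : u ≠ v)
    (hp : s(u, v) ∉ p.edges) : 2 ≤ p.length := by
  cases p with
  | nil => exact absurd rfl huv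
  | cons _ q =>
    cases q with
    | nil => simp at hp
    | cons _ _ => simp

lemma IsTrail.boundary_charVec [DecidableEq V] [Fintype G.edgeSet] {p : G.Walk u v}
    (hp : p.IsTrail) : G.boundary p.charVec = Pi.single u 1 + Pi.single v 1 := by
  induction p with
  | nil => simp [ZModModule.add_self]
  | @cons a b c h p ih =>
    rw [isTrail_cons] at hp
    rw [charVec_cons h hp.2, map_add, boundary_single, ih hp.1, add_assoc,
      ← add_assoc (Pi.single b 1), ZModModule.add_self, zero_add]

lemma IsTrail.boundary_charVec_eq_zero [DecidableEq V] [Fintype G.edgeSet] {p : G.Walk v v}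
    (hp : p.IsTrail) : G.boundary p.charVec = 0 := by
  rw [hp.boundary_charVec, ZModModule.add_self]

lemma IsCycle.exists_split_of_chord [DecidableEq V] {c : G.Walk x x} (hc : c.IsCycle)
    (hy : y ∈ c.support) (hxy : G.Adj x y) (hch : s(x, y) ∉ c.edges) :
    ∃ (c₁ : G.Walk y y) (c₂ : G.Walk x x), c₁.IsCycle ∧ c₂.IsCycle ∧
      c₁.length < c.length ∧ c₂.length < c.length ∧ c.charVec = c₁.charVec + c₂.charVec := by
  set p := c.takeUntil y hy
  set q := c.dropUntil y hy
  have hpq : p.append q = c := c.take_spec hy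
  have hp : p.IsPath := hc.isPath_takeUntil hy
  have hq : q.IsPath := IsCycle.isPath_of_append_right (not_nil_of_ne hxy.ne) (hpq ▸ hc)
  have hchp : s(x, y) ∉ p.edges := fun h => hch (c.edges_takeUntil_subset_edges hy h)
  have hchq : s(x, y) ∉ q.edges := fun h => hch (c.edges_dropUntil_subset_edges hy h)
  have hchp' : s(y, x) ∉ p.edges := by rwa [Sym2.eq_swap]
  have hchq' : s(y, x) ∉ q.edges := by rwa [Sym2.eq_swap]
  have hlen : c.length = p.length + q.length := by rw [← hpq, length_append]
  have hp₂ := two_le_length_of_ne_of_notMem_edges hxy.ne hchp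
  have hq₂ := two_le_length_of_ne_of_notMem_edges hxy.ne.symm hchq'
  refine ⟨cons hxy.symm p, cons hxy q, (cons_isCycle_iff p hxy.symm).mpr ⟨hp, hchp'⟩,
    (cons_isCycle_iff q hxy).mpr ⟨hq, hchq⟩, by simp; omega, by simp; omega, ?_⟩
  rw [← hpq, charVec_append (hc.isTrail.disjoint_edges_takeUntil_dropUntil hy),
    charVec_cons _ hchp', charVec_cons _ hchq,
    show (⟨s(y, x), hxy.symm⟩ : G.edgeSet) = ⟨s(x, y), hxy⟩ from Subtype.ext Sym2.eq_swap,
    add_add_add_comm, ZModModule.add_self, zero_add]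

lemma IsCycle.four_le_length_of_cliqueFree {c : G.Walk v v} (hc : c.IsCycle)
    (htf : G.CliqueFree 3) : 4 ≤ c.length := by
  have := hc.three_le_length
  by_contra h
  obtain ⟨s, hs⟩ := is3Clique_iff_exists_cycle_length_three.mpr ⟨v, c, hc, by omega⟩
  exact htf s hs

end Walk

theorem charVec_mem_holeSpace (htf : G.CliqueFree 3) {v : V} {c : G.Walk v v}
    (hc : c.IsCycle) : c.charVec ∈ holeSpace G := by
  classical
  induction hn : c.length using Nat.strong_induction_on generalizing v c with
  | _ n ih =>
  by_cases hind : ∀ x y, x ∈ c.support → y ∈ c.support → G.Adj x y → s(x, y) ∈ c.edges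
  · exact Submodule.subset_span
      ⟨v, c, ⟨hc, hc.four_le_length_of_cliqueFree htf, hind⟩, (cycleVec_eq_charVec c).symm⟩
  push Not at hind
  obtain ⟨x, y, hx, hy, hxy, hch⟩ := hind
  obtain ⟨c₁, c₂, hc₁, hc₂, hl₁, hl₂, hsplit⟩ := (hc.rotate hx).exists_split_of_chord
    ((c.mem_support_rotate_iff x hx).mpr hy) hxy (hch ∘ (c.rotate_edges x hx).mem_iff.mp)
  rw [Walk.length_rotate] at hl₁ hl₂
  rw [← Walk.charVec_rotate hx, hsplit]
  exact add_mem (ih _ (hn ▸ hl₁) hc₁ rfl) (ih _ (hn ▸ hl₂) hc₂ rfl)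

def supportGraph (f : G.edgeSet → ZMod 2) : SimpleGraph V where
  Adj a b := ∃ h : G.Adj a b, f ⟨s(a, b), h⟩ ≠ 0
  symm.symm _ _ := fun ⟨h, hf⟩ => ⟨h.symm, by convert hf using 3; exact Subtype.ext Sym2.eq_swap⟩
  loopless.irrefl _ := fun ⟨h, _⟩ => h.ne rfl

section SupportGraph

variable {f : G.edgeSet → ZMod 2}

lemma supportGraph_adj {a b : V} :
    (supportGraph f).Adj a b ↔ ∃ h : G.Adj a b, f ⟨s(a, b), h⟩ ≠ 0 := Iff.rfl

lemma supportGraph_le : supportGraph f ≤ G := fun _ _ h => (supportGraph_adj.mp h).1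

lemma mem_edgeSet_supportGraph {e : G.edgeSet} :
    (e : Sym2 V) ∈ (supportGraph f).edgeSet ↔ f e ≠ 0 := by
  obtain ⟨e, he⟩ := e
  induction e using Sym2.ind with
  | _ a b => exact ⟨fun h => (supportGraph_adj.mp h).2, fun h => supportGraph_adj.mpr ⟨he, h⟩⟩

variable [DecidableEq V] [Fintype G.edgeSet]

lemma exists_ne_of_boundary_apply_eq_zero {v : V} (hf : G.boundary f v = 0) {e₀ : G.edgeSet}
    (hv : v ∈ (e₀ : Sym2 V)) (he₀ : f e₀ ≠ 0) : ∃ e ≠ e₀, v ∈ (e : Sym2 V) ∧ f e ≠ 0 := by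
  by_contra! h
  have : G.boundary f v = f e₀ := by
    rw [boundary_apply, Finset.sum_eq_single e₀ (fun e _ he => ?_) (by simp),
      edgeBoundary_apply_of_mem hv (G.not_isDiag_of_mem_edgeSet e₀.2), mul_one]
    by_cases hve : v ∈ (e : Sym2 V)
    · rw [h e he hve, zero_mul]
    · rw [edgeBoundary_apply_of_notMem hve, mul_zero]
  exact he₀ (this ▸ hf)

lemma supportGraph_not_isAcyclic (hf : f ∈ ker G.boundary) (hf₀ : f ≠ 0) :
    ¬ (supportGraph f).IsAcyclic := by
  intro hacyc
  have : Finite (supportGraph f).edgeSet :=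
    (Set.toFinite G.edgeSet).subset (edgeSet_mono supportGraph_le)
  obtain ⟨e₀, he₀⟩ := Function.ne_iff.mp hf₀
  obtain ⟨a, b, hab⟩ : ∃ a b, (e₀ : Sym2 V) = s(a, b) := ⟨_, _, (Quot.out_eq _).symm⟩
  have hadj : (supportGraph f).Adj a b := by
    rw [← mem_edgeSet, ← hab]
    exact mem_edgeSet_supportGraph.mpr he₀
  have : Nonempty V := ⟨a⟩
  -- The end `v` of a longest path has a second neighbour `w` in the support, since the boundary
  -- vanishes at `v`; `w` can neither lie on the path (acyclicity) nor off it (maximality).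
  obtain ⟨u, v, p, hp, hmax⟩ := Walk.exists_isPath_forall_isPath_length_le_length (supportGraph f)
  have hnil : ¬ p.Nil := by
    have := hmax a b (.cons hadj .nil) (by simp [hadj.ne])
    rw [Walk.not_nil_iff_lt_length]
    simp only [Walk.length_cons, Walk.length_nil] at this
    omega
  obtain ⟨hG, hfa⟩ := supportGraph_adj.mp (p.adj_penultimate hnil)
  obtain ⟨e, hne, hve, hfe⟩ :=
    exists_ne_of_boundary_apply_eq_zero (congrFun (mem_ker.mp hf) v) (Sym2.mem_mk_right _ v) hfa
  obtain ⟨w, hw⟩ := Sym2.mem_iff_exists.mp hve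
  have hvw : (supportGraph f).Adj v w := by
    rw [← mem_edgeSet, ← hw]
    exact mem_edgeSet_supportGraph.mpr hfe
  by_cases hws : w ∈ p.support
  · refine hne (Subtype.ext ?_)
    rw [hw, hacyc.eq_penultimate_of_adj_end hp hvw hws, Sym2.eq_swap]
  · have := hmax _ _ _ (hp.concat hws hvw)
    rw [Walk.length_concat] at this
    omega

lemma exists_isCycle_of_mem_ker_boundary (hf : f ∈ ker G.boundary) (hf₀ : f ≠ 0) :
    ∃ (v : V) (c : G.Walk v v), c.IsCycle ∧
      ∀ e : G.edgeSet, (e : Sym2 V) ∈ c.edges → f e ≠ 0 := by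
  obtain ⟨v, c, hc⟩ : ∃ (v : V) (c : (supportGraph f).Walk v v), c.IsCycle := by
    simpa [IsAcyclic] using supportGraph_not_isAcyclic hf hf₀
  refine ⟨v, c.mapLe supportGraph_le, hc.mapLe _, fun e he => ?_⟩
  rw [Walk.edges_mapLe_eq_edges] at he
  exact mem_edgeSet_supportGraph.mp (c.edges_subset_edgeSet he)

lemma filter_add_charVec_ssubset {v : V} {c : G.Walk v v} (hc : c.IsCycle)
    (hcf : ∀ e : G.edgeSet, (e : Sym2 V) ∈ c.edges → f e ≠ 0) :
    Finset.univ.filter (fun e => (f + c.charVec) e ≠ 0) ⊂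
      Finset.univ.filter (fun e => f e ≠ 0) := by
  have hcancel : ∀ e : G.edgeSet, (e : Sym2 V) ∈ c.edges → f e + c.charVec e = 0 := by
    intro e he
    have key : ∀ a : ZMod 2, a ≠ 0 → a + 1 = 0 := by decide
    rw [Walk.charVec_apply_of_mem he, key _ (hcf e he)]
  rw [Finset.ssubset_iff_of_subset]
  · have hmem := c.mk_start_snd_mem_edges hc.not_nil
    let e₁ : G.edgeSet := ⟨_, c.edges_subset_edgeSet hmem⟩
    exact ⟨e₁, by simpa using hcf e₁ hmem, by simpa using hcancel e₁ hmem⟩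
  · intro e
    by_cases he : (e : Sym2 V) ∈ c.edges
    · simp [hcancel e he]
    · simp [Walk.charVec_apply_of_notMem he]

end SupportGraph

section KerBoundary

variable [DecidableEq V] [Fintype G.edgeSet]

theorem ker_boundary_le {S : Submodule (ZMod 2) (G.edgeSet → ZMod 2)}
    (hS : ∀ (v : V) (c : G.Walk v v), c.IsCycle → c.charVec ∈ S) : ker G.boundary ≤ S := by
  intro f hf
  induction hn : (Finset.univ.filter (fun e => f e ≠ 0)).card using Nat.strong_induction_on
    generalizing f with
  | _ n ih =>
  by_cases hf₀ : f = 0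
  · exact hf₀ ▸ S.zero_mem
  obtain ⟨v, c, hc, hcf⟩ := exists_isCycle_of_mem_ker_boundary hf hf₀
  have hg : f + c.charVec ∈ ker G.boundary :=
    add_mem hf (mem_ker.mpr hc.isTrail.boundary_charVec_eq_zero)
  have hlt := hn ▸ Finset.card_lt_card (filter_add_charVec_ssubset hc hcf)
  rw [← add_zero f, ← ZModModule.add_self c.charVec, ← add_assoc]
  exact add_mem (ih _ hlt hg rfl) (hS v c hc)

theorem holeSpace_eq_ker_boundary (htf : G.CliqueFree 3) : holeSpace G = ker G.boundary := by
  refine le_antisymm (Submodule.span_le.mpr ?_)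
    (ker_boundary_le fun _ _ hc => charVec_mem_holeSpace htf hc)
  rintro _ ⟨v, w, hw, rfl⟩
  rw [SetLike.mem_coe, mem_ker, cycleVec_eq_charVec]
  exact hw.1.isTrail.boundary_charVec_eq_zero

end KerBoundary

section Dimension

variable [Fintype V]

variable (V) in
def sumCoords : (V → ZMod 2) →ₗ[ZMod 2] ZMod 2 :=
  Fintype.linearCombination (ZMod 2) fun _ => 1

lemma sumCoords_apply (g : V → ZMod 2) : sumCoords V g = ∑ v, g v := by
  simp [sumCoords, Fintype.linearCombination_apply]

lemma finrank_ker_sumCoords [Nonempty V] :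
    finrank (ZMod 2) (ker (sumCoords V)) + 1 = Fintype.card V := by
  classical
  have hsurj : range (sumCoords V) = ⊤ :=
    range_eq_top.mpr fun c => ⟨Pi.single (Classical.arbitrary V) c, by simp [sumCoords_apply]⟩
  have := finrank_range_add_finrank_ker (sumCoords V)
  rw [hsurj, finrank_top, finrank_self, finrank_fintype_fun_eq_card] at this
  omega

variable [DecidableEq V] [Fintype G.edgeSet]

lemma range_boundary (hconn : G.Connected) : range G.boundary = ker (sumCoords V) := by
  apply le_antisymm
  · rintro _ ⟨f, rfl⟩
    simp [mem_ker, sumCoords_apply, boundary_apply, Finset.sum_comm (γ := V), ← Finset.mul_sum,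
      sum_edgeBoundary]
  · intro g hg
    obtain ⟨v₀⟩ := hconn.nonempty
    have hg : g = ∑ v, g v • (Pi.single v 1 + Pi.single v₀ 1) := by
      rw [mem_ker, sumCoords_apply] at hg
      simp only [smul_add, Finset.sum_add_distrib, ← Finset.sum_smul, hg, zero_smul, add_zero]
      simp_rw [← Pi.single_smul, smul_eq_mul, mul_one]
      exact (Finset.univ_sum_single g).symm
    rw [hg]
    refine Submodule.sum_mem _ fun v _ => Submodule.smul_mem _ _ ?_
    obtain ⟨p, hp⟩ := hconn.exists_isPath v v₀
    exact ⟨p.charVec, hp.isTrail.boundary_charVec⟩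

lemma finrank_ker_boundary (hconn : G.Connected) :
    finrank (ZMod 2) (ker G.boundary) + Fintype.card V = Fintype.card G.edgeSet + 1 := by
  have := hconn.nonempty
  have := finrank_range_add_finrank_ker G.boundary
  rw [range_boundary hconn, finrank_fintype_fun_eq_card] at this
  have := finrank_ker_sumCoords (V := V)
  omega

theorem holeDim_add_card (hconn : G.Connected) (htf : G.CliqueFree 3) :
    holeDim G + Fintype.card V = Fintype.card G.edgeSet + 1 := by
  rw [holeDim, holeSpace_eq_ker_boundary htf]
  exact finrank_ker_boundary hconn

end Dimension

end SimpleGraph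

theorem DigraphAcyclic.of_rank {α : Type*} {D : α → α → Prop} (r : α → ℕ)
    (hr : ∀ x y, D x y → r x < r y) : DigraphAcyclic D := by
  have hlt : ∀ x y, Relation.TransGen D x y → r x < r y := by
    intro x y h
    induction h with
    | single h => exact hr _ _ h
    | tail _ h ih => exact ih.trans (hr _ _ h)
  exact fun a ha => lt_irrefl _ (hlt a a ha)

theorem DigraphAcyclic.exists_two_minimal {α : Type*} [Finite α] [Nontrivial α]
    {D : α → α → Prop} (hD : DigraphAcyclic D) :
    ∃ w₁ w₂, w₁ ≠ w₂ ∧ ∀ x, ¬ D x w₁ ∧ (D x w₂ → x = w₁) := by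
  have : IsTrans α (Relation.TransGen D) := ⟨fun _ _ _ => Relation.TransGen.trans⟩
  have : Std.Irrefl (Relation.TransGen D) := ⟨hD⟩
  have hwf : WellFounded D :=
    Subrelation.wf Relation.TransGen.single (Finite.wellFounded_of_trans_of_irrefl _)
  obtain ⟨w₁, -, h₁⟩ := hwf.has_min Set.univ Set.univ_nonempty
  obtain ⟨w₂, hne, h₂⟩ := hwf.has_min {w | w ≠ w₁} (exists_ne w₁)
  exact ⟨w₁, w₂, Ne.symm hne, fun x => ⟨h₁ x trivial, fun h => by_contra fun hx => h₂ x hx h⟩⟩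

section Competition

open SimpleGraph

variable {V : Type*} {G : SimpleGraph V} {k : ℕ} {D : V ⊕ Fin k → V ⊕ Fin k → Prop}

lemma addIsolated_adj {x y : V ⊕ Fin k} :
    (addIsolated G k).Adj x y ↔ ∃ a b, x = inl a ∧ y = inl b ∧ G.Adj a b := by
  rw [addIsolated, fromRel_adj]
  constructor
  · rintro ⟨-, h | ⟨a, b, rfl, rfl, hab⟩⟩
    · exact h
    · exact ⟨b, a, rfl, rfl, hab.symm⟩
  · rintro ⟨a, b, rfl, rfl, hab⟩
    exact ⟨by simpa using hab.ne, Or.inl ⟨a, b, rfl, rfl, hab⟩⟩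

namespace IsCompetitionGraphOf

lemma adj_of_common_prey (hC : IsCompetitionGraphOf (addIsolated G k) D) {a b : V}
    (hab : a ≠ b) {w : V ⊕ Fin k} (ha : D (inl a) w) (hb : D (inl b) w) : G.Adj a b := by
  obtain ⟨a', b', ha', hb', h⟩ :=
    addIsolated_adj.mp ((hC _ _).mpr ⟨by simpa using hab, w, ha, hb⟩)
  rwa [inl_injective ha', inl_injective hb']

lemma exists_common_prey (hC : IsCompetitionGraphOf (addIsolated G k) D) (e : G.edgeSet) :
    ∃ w, ∀ a ∈ (e : Sym2 V), D (inl a) w := by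
  obtain ⟨e, he⟩ := e
  induction e using Sym2.ind with
  | _ a b =>
    obtain ⟨-, w, ha, hb⟩ := (hC _ _).mp (addIsolated_adj.mpr ⟨a, b, rfl, rfl, he⟩)
    exact ⟨w, fun c hc => by rcases Sym2.mem_iff.mp hc with rfl | rfl <;> assumption⟩

lemma eq_of_common_prey (hC : IsCompetitionGraphOf (addIsolated G k) D)
    (htf : G.CliqueFree 3) {e₁ e₂ : G.edgeSet} {w : V ⊕ Fin k}
    (h₁ : ∀ a ∈ (e₁ : Sym2 V), D (inl a) w) (h₂ : ∀ a ∈ (e₂ : Sym2 V), D (inl a) w) :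
    e₁ = e₂ := by
  classical
  obtain ⟨e₁, he₁⟩ := e₁
  obtain ⟨e₂, he₂⟩ := e₂
  induction e₁ using Sym2.ind with
  | _ a b =>
  induction e₂ using Sym2.ind with
  | _ c d =>
  have hsub : ∀ x ∈ s(c, d), x = a ∨ x = b := by
    intro x hx
    by_contra! h
    exact htf {a, b, x} (is3Clique_triple_iff.mpr ⟨he₁,
      hC.adj_of_common_prey h.1.symm (h₁ a (by simp)) (h₂ x hx),
      hC.adj_of_common_prey h.2.symm (h₁ b (by simp)) (h₂ x hx)⟩)
  have hcd : G.Adj c d := he₂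
  rcases hsub c (by simp) with rfl | rfl <;> rcases hsub d (by simp) with rfl | rfl
  all_goals first | exact absurd rfl hcd.ne | rfl | exact Subtype.ext Sym2.eq_swap

theorem card_edgeSet_add_two_le [Fintype V] [Nontrivial V] [Fintype G.edgeSet]
    (hC : IsCompetitionGraphOf (addIsolated G k) D) (htf : G.CliqueFree 3)
    (hD : DigraphAcyclic D) :
    Fintype.card G.edgeSet + 2 ≤ Fintype.card V + k := by
  classical
  choose π hπ using hC.exists_common_prey
  have hinj : Injective π := fun e₁ e₂ h => hC.eq_of_common_prey htf (hπ e₁) (h ▸ hπ e₂)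
  have : Nontrivial (V ⊕ Fin k) := inl_injective.nontrivial
  obtain ⟨w₁, w₂, hne, hw⟩ := hD.exists_two_minimal
  have hmiss (e : G.edgeSet) : π e ≠ w₁ ∧ π e ≠ w₂ := by
    obtain ⟨⟨a, b⟩, he⟩ := e
    have ha := hπ ⟨s(a, b), he⟩ a (Sym2.mem_mk_left a b)
    have hb := hπ ⟨s(a, b), he⟩ b (Sym2.mem_mk_right a b)
    refine ⟨fun h => (hw _).1 (h ▸ ha), fun h => G.ne_of_adj he ?_⟩
    exact inl_injective (((hw _).2 (h ▸ ha)).trans ((hw _).2 (h ▸ hb)).symm)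
  have hle : (Finset.univ.image π).card ≤ ((Finset.univ.erase w₁).erase w₂).card := by
    refine Finset.card_le_card fun x hx => ?_
    obtain ⟨e, -, rfl⟩ := Finset.mem_image.mp hx
    simp [(hmiss e).1, (hmiss e).2]
  rw [Finset.card_image_of_injective _ hinj, Finset.card_erase_of_mem (by simp [hne.symm]),
    Finset.card_erase_of_mem (Finset.mem_univ _), Finset.card_univ, Finset.card_univ,
    Fintype.card_sum, Fintype.card_fin] at hle
  have := Fintype.one_lt_card (α := V)
  omega

end IsCompetitionGraphOf

theorem exists_competitionDigraph_of_injective_prey (π : G.edgeSet → V ⊕ Fin k)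
    (hπ : Injective π) (r : V ⊕ Fin k → ℕ)
    (hr : ∀ e : G.edgeSet, ∀ a ∈ (e : Sym2 V), r (inl a) < r (π e)) :
    ∃ D, DigraphAcyclic D ∧ IsCompetitionGraphOf (addIsolated G k) D := by
  refine ⟨fun x y => ∃ e : G.edgeSet, (∃ a ∈ (e : Sym2 V), x = inl a) ∧ y = π e,
    DigraphAcyclic.of_rank r ?_, fun x y => ?_⟩
  · rintro _ _ ⟨e, ⟨a, ha, rfl⟩, rfl⟩
    exact hr e a ha
  rw [addIsolated_adj]
  constructor
  · rintro ⟨a, b, rfl, rfl, hab⟩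
    exact ⟨by simpa using hab.ne, π ⟨s(a, b), hab⟩, ⟨_, ⟨a, Sym2.mem_mk_left a b, rfl⟩, rfl⟩,
      ⟨_, ⟨b, Sym2.mem_mk_right a b, rfl⟩, rfl⟩⟩
  · rintro ⟨hxy, _, ⟨e, ⟨a, ha, rfl⟩, rfl⟩, ⟨e', ⟨b, hb, rfl⟩, he'⟩⟩
    obtain rfl := hπ he'
    have hab : a ≠ b := fun h => hxy (h ▸ rfl)
    refine ⟨a, b, rfl, rfl, ?_⟩
    rw [← mem_edgeSet, ← (Sym2.mem_and_mem_iff hab).mp ⟨ha, hb⟩]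
    exact e.2

theorem exists_competitionDigraph_of_card_le [Fintype V] [Fintype G.edgeSet] {A : Type*}
    [Fintype A] (τ : A → G.edgeSet) (hτ : Injective τ) (q : A → V) (hq : Injective q)
    (rk : V → ℕ) (hrk : ∀ j, ∀ a ∈ (τ j : Sym2 V), rk a < rk (q j))
    (hk : Fintype.card G.edgeSet ≤ Fintype.card A + k) :
    ∃ D, DigraphAcyclic D ∧ IsCompetitionGraphOf (addIsolated G k) D := by
  classical
  have hcard : Fintype.card {e // ¬ ∃ j, τ j = e} ≤ Fintype.card (Fin k) := by
    rw [Fintype.card_subtype_compl, Fintype.card_fin,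
      ← Fintype.card_congr (α := A) (β := {e // ∃ j, τ j = e}) (Equiv.ofInjective τ hτ)]
    omega
  obtain ⟨g⟩ := Embedding.nonempty_of_card_le hcard
  let π : G.edgeSet → V ⊕ Fin k := fun e =>
    if h : ∃ j, τ j = e then inl (q h.choose) else inr (g ⟨e, h⟩)
  refine exists_competitionDigraph_of_injective_prey π ?_
    (Sum.elim rk fun _ => Finset.univ.sup rk + 1) ?_
  · intro e₁ e₂ h
    by_cases h₁ : ∃ j, τ j = e₁ <;> by_cases h₂ : ∃ j, τ j = e₂ <;>
      simp only [π, h₁, h₂, dite_true, dite_false, inl.injEq, inr.injEq, reduceCtorEq] at h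
    · rw [← h₁.choose_spec, ← h₂.choose_spec, hq h]
    · exact congrArg Subtype.val (g.injective h)
  · intro e a ha
    by_cases h : ∃ j, τ j = e
    · simp only [π, h, dite_true, elim_inl]
      rw [← h.choose_spec] at ha
      exact hrk _ a ha
    · simp only [π, h, dite_false, elim_inl, elim_inr]
      exact Nat.lt_succ_of_le (Finset.le_sup (Finset.mem_univ a))

end Competition

namespace SimpleGraph

variable {V : Type*} {G : SimpleGraph V}

theorem Connected.exists_adj_dist_lt (hconn : G.Connected) {v₀ v : V} (hne : v ≠ v₀) :
    ∃ u, G.Adj u v ∧ G.dist v₀ u < G.dist v₀ v := by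
  obtain ⟨p, hp⟩ := hconn.exists_walk_length_eq_dist v v₀
  have hnil : ¬ p.Nil := Walk.not_nil_of_ne hne
  refine ⟨p.snd, (p.adj_snd hnil).symm, ?_⟩
  rw [dist_comm, dist_comm (u := v₀), ← hp, ← p.length_tail_add_one hnil]
  exact Nat.lt_succ_of_le (dist_le _)

theorem Connected.exists_equiv_fin_forall_exists_lt_adj [Fintype V] (hconn : G.Connected) :
    ∃ f : Fin (Fintype.card V) ≃ V,
      ∀ i : Fin (Fintype.card V), 0 < (i : ℕ) → ∃ j < i, G.Adj (f j) (f i) := by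
  obtain ⟨v₀⟩ := hconn.nonempty
  let e := (Fintype.equivFin V).symm
  let f := (Tuple.sort fun i => G.dist v₀ (e i)).trans e
  have hmono : Monotone fun i => G.dist v₀ (f i) :=
    Tuple.monotone_sort fun i => G.dist v₀ (e i)
  refine ⟨f, fun i hi => ?_⟩
  have hfi : f i ≠ v₀ := by
    intro h
    have h₀ := hmono (show (⟨0, by omega⟩ : Fin _) ≤ i from Nat.zero_le _)
    simp only [h, dist_self, nonpos_iff_eq_zero, hconn.dist_eq_zero_iff] at h₀
    have := f.injective (h₀.symm.trans h.symm)
    simp [Fin.ext_iff] at this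
    omega
  obtain ⟨u, hu, hlt⟩ := hconn.exists_adj_dist_lt hfi
  refine ⟨f.symm u, lt_of_not_ge fun hle => ?_, by simpa using hu⟩
  have := hmono hle
  simp only [Equiv.apply_symm_apply] at this
  omega

theorem Connected.exists_competitionDigraph [Fintype V] [Fintype G.edgeSet] (hconn : G.Connected)
    {k : ℕ} (hk : Fintype.card G.edgeSet + 2 ≤ Fintype.card V + k) :
    ∃ D, DigraphAcyclic D ∧ IsCompetitionGraphOf (addIsolated G k) D := by
  obtain ⟨f, hf⟩ := hconn.exists_equiv_fin_forall_exists_lt_adj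
  choose! parent hparent using hf
  -- The edge joining vertex `j + 1` to its earlier neighbour preys on vertex `j + 2`.
  let vert (j : Fin (Fintype.card V - 2)) : Fin (Fintype.card V) := ⟨j + 1, by omega⟩
  let τ (j : Fin (Fintype.card V - 2)) : G.edgeSet :=
    ⟨s(f (parent (vert j)), f (vert j)), (hparent _ (Nat.succ_pos _)).2⟩
  have hlt (j) : (parent (vert j) : ℕ) < j + 1 := (hparent (vert j) (Nat.succ_pos _)).1
  refine exists_competitionDigraph_of_card_le τ (fun j₁ j₂ h => ?_)
    (fun j => f ⟨j + 2, by omega⟩) (fun j₁ j₂ h => ?_) (fun v => f.symm v) (fun j a ha => ?_)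
    (by rw [Fintype.card_fin]; omega)
  · have h' := congrArg Subtype.val h
    simp only [τ, Sym2.eq_iff, f.injective.eq_iff, Fin.ext_iff, vert] at h'
    have := hlt j₁
    have := hlt j₂
    dsimp only [vert] at *
    ext
    omega
  · simpa [Fin.ext_iff] using f.injective h
  · have := hlt j
    simp only [τ, vert] at ha this
    rcases Sym2.mem_iff.mp ha with rfl | rfl <;> (simp only [Equiv.symm_apply_apply]; omega)

end SimpleGraph

/-- If `G` is a nontrivial connected triangle-free graph, then
`k(G) = dim H(G) + 1`. -/
theorem stmt0 {V : Type*} [Fintype V] (G : SimpleGraph V)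
    (hconn : G.Connected) (hnontrivial : Nontrivial V) (htf : G.CliqueFree 3) :
    competitionNumber G = holeDim G + 1 := by
  classical
  have hdim := holeDim_add_card hconn htf
  have hmem : holeDim G + 1 ∈ {k : ℕ | ∃ D : (V ⊕ Fin k) → (V ⊕ Fin k) → Prop,
      DigraphAcyclic D ∧ IsCompetitionGraphOf (addIsolated G k) D} :=
    hconn.exists_competitionDigraph (by omega)
  refine le_antisymm (Nat.sInf_le hmem) (le_csInf ⟨_, hmem⟩ ?_)
  rintro k ⟨D, hD, hC⟩
  have := hC.card_edgeSet_add_two_le htf hD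
  omega
end

section
/- Let G be a connected graph which has a connected spanning subgraph G' such that G' contains all the triangles of G and k(G') = 1. Then the competition number of G satisfies k(G) ≤ dim H(G) + 1. -/
open SimpleGraph

/-!
If `D'` is an acyclic digraph whose competition graph is `G'` plus one isolated vertex, adding for
every edge `xy ∈ E(G) \ E(G')` a new sink with arcs from `x` and `y` gives an acyclic digraph
whose competition graph is `G` plus `1 + |E(G) \ E(G')|` isolated vertices.

To bound `|E(G) \ E(G')|` by `dim H(G)`, split cycles along chords: mod 2, every cycle of `G` is a
sum of holes and triangles, and triangles lie in `G'`. Hence the projection onto the coordinates in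
`E(G) \ E(G')` maps `H(G)` onto the image of the whole cycle space, which contains the unit vector
of every `ab ∈ E(G) \ E(G')`: it is the image of the cycle closing `ab` by a path in `G'`.
-/

open Function

section Competition

variable {α β V : Type*}

def IsAcyclicCompetitionGraph (G : SimpleGraph α) : Prop :=
  ∃ D : α → α → Prop, DigraphAcyclic D ∧ IsCompetitionGraphOf G D

theorem SimpleGraph.map_sup (f : α → β) (G₁ G₂ : SimpleGraph α) :
    (G₁ ⊔ G₂).map f = G₁.map f ⊔ G₂.map f := by
  ext x y
  simp only [map_adj', sup_adj]
  grind

theorem addIsolated_eq_map (G : SimpleGraph V) (k : ℕ) : addIsolated G k = G.map Sum.inl := by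
  ext x y
  simp only [addIsolated, fromRel_adj, map_adj']
  grind [Adj.symm]

theorem DigraphAcyclic.map {D : α → α → Prop} (hD : DigraphAcyclic D) {f : α → β}
    (hf : Injective f) : DigraphAcyclic (Relation.Map D f f) := by
  have lift : ∀ {x y}, Relation.TransGen (Relation.Map D f f) x y →
      ∃ a b, f a = x ∧ f b = y ∧ Relation.TransGen D a b := by
    intro x y h
    induction h with
    | single h =>
      obtain ⟨a, b, hab, rfl, rfl⟩ := h
      exact ⟨a, b, rfl, rfl, .single hab⟩
    | tail _ h ih =>
      obtain ⟨a, b, rfl, rfl, hab⟩ := ih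
      obtain ⟨b', c, hbc, hb, rfl⟩ := h
      cases hf hb
      exact ⟨a, c, rfl, rfl, hab.tail hbc⟩
  intro x hx
  obtain ⟨a, b, rfl, hb, hab⟩ := lift hx
  cases hf hb
  exact hD a hab

theorem DigraphAcyclic.sup_of_isSink {D S : α → α → Prop} (hD : DigraphAcyclic D)
    (hS : ∀ a b, S a b → ∀ c, ¬ (D ⊔ S) b c) : DigraphAcyclic (D ⊔ S) := by
  have key : ∀ {a b}, Relation.TransGen (D ⊔ S) a b →
      Relation.TransGen D a b ∨ ∀ c, ¬ (D ⊔ S) b c := by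
    intro a b h
    induction h with
    | single h => exact h.imp .single (hS _ _)
    | @tail b c _ hbc ih =>
      rcases hbc with hbc | hbc
      · rcases ih with ih | ih
        · exact .inl (ih.tail hbc)
        · exact absurd (.inl hbc) (ih c)
      · exact .inr (hS _ _ hbc)
  intro a ha
  obtain ⟨c, hac, -⟩ := Relation.TransGen.head'_iff.mp ha
  exact (key ha).elim (hD a) (fun h => h c hac)

theorem IsCompetitionGraphOf.map {G : SimpleGraph α} {D : α → α → Prop}
    (h : IsCompetitionGraphOf G D) {f : α → β} (hf : Injective f) :
    IsCompetitionGraphOf (G.map f) (Relation.Map D f f) := by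
  intro x y
  rw [map_adj']
  constructor
  · rintro ⟨hxy, a, b, hab, rfl, rfl⟩
    obtain ⟨-, v, hav, hbv⟩ := (h a b).mp hab
    exact ⟨hxy, f v, ⟨a, v, hav, rfl, rfl⟩, ⟨b, v, hbv, rfl, rfl⟩⟩
  · rintro ⟨hxy, w, ⟨a, v, hav, rfl, rfl⟩, ⟨b, v', hbv, rfl, hv⟩⟩
    cases hf hv
    exact ⟨hxy, a, b, (h a b).mpr ⟨fun hab => hxy (hab ▸ rfl), v, hav, hbv⟩, rfl, rfl⟩

theorem IsCompetitionGraphOf.sup {G₁ G₂ : SimpleGraph α} {D₁ D₂ : α → α → Prop}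
    (h₁ : IsCompetitionGraphOf G₁ D₁) (h₂ : IsCompetitionGraphOf G₂ D₂)
    (hdisj : ∀ x y v, D₁ x v → ¬ D₂ y v) :
    IsCompetitionGraphOf (G₁ ⊔ G₂) (D₁ ⊔ D₂) := by
  intro x y
  rw [sup_adj, h₁, h₂]
  constructor
  · rintro (⟨hxy, v, hx, hy⟩ | ⟨hxy, v, hx, hy⟩)
    exacts [⟨hxy, v, .inl hx, .inl hy⟩, ⟨hxy, v, .inr hx, .inr hy⟩]
  · rintro ⟨hxy, v, hx | hx, hy | hy⟩
    · exact .inl ⟨hxy, v, hx, hy⟩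
    · exact absurd hy (hdisj x y v hx)
    · exact absurd hx (hdisj y x v hy)
    · exact .inr ⟨hxy, v, hx, hy⟩

theorem IsAcyclicCompetitionGraph.map {G : SimpleGraph α} (h : IsAcyclicCompetitionGraph G)
    {f : α → β} (hf : Injective f) : IsAcyclicCompetitionGraph (G.map f) :=
  let ⟨_, hD, hG⟩ := h
  ⟨_, hD.map hf, hG.map hf⟩

def incidenceDigraph (H : SimpleGraph V) : V ⊕ H.edgeSet → V ⊕ H.edgeSet → Prop :=
  fun a b => ∃ x e, a = .inl x ∧ b = .inr e ∧ x ∈ (e : Sym2 V)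

theorem isCompetitionGraphOf_incidenceDigraph (H : SimpleGraph V) :
    IsCompetitionGraphOf (H.map Sum.inl) (incidenceDigraph H) := by
  intro a b
  rw [map_adj']
  constructor
  · rintro ⟨hab, x, y, hxy, rfl, rfl⟩
    exact ⟨hab, .inr ⟨s(x, y), hxy⟩, ⟨x, _, rfl, rfl, Sym2.mem_mk_left x y⟩,
      ⟨y, _, rfl, rfl, Sym2.mem_mk_right x y⟩⟩
  · rintro ⟨hab, v, ⟨x, e, rfl, rfl, hx⟩, ⟨y, e', rfl, he, hy⟩⟩
    cases Sum.inr_injective he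
    have hxy : x ≠ y := fun h => hab (h ▸ rfl)
    have he : (e : Sym2 V) = s(x, y) := (Sym2.mem_and_mem_iff hxy).mp ⟨hx, hy⟩
    exact ⟨hab, x, y, H.mem_edgeSet.mp (he ▸ e.2), rfl, rfl⟩

theorem IsAcyclicCompetitionGraph.map_inl_sup_sdiff {G G' : SimpleGraph V} (hle : G' ≤ G)
    (h : IsAcyclicCompetitionGraph (G'.map (Sum.inl : V → V ⊕ β))) :
    IsAcyclicCompetitionGraph (G.map (Sum.inl : V → V ⊕ (β ⊕ (G \ G').edgeSet))) := by
  obtain ⟨D', hD', hG'⟩ := h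
  have hinl : Injective (Sum.map id Sum.inl : V ⊕ β → V ⊕ (β ⊕ (G \ G').edgeSet)) :=
    Sum.map_injective.mpr ⟨injective_id, Sum.inl_injective⟩
  have hinr : Injective (Sum.map id Sum.inr : V ⊕ (G \ G').edgeSet → V ⊕ (β ⊕ _)) :=
    Sum.map_injective.mpr ⟨injective_id, Sum.inr_injective⟩
  set D₁ : V ⊕ (β ⊕ (G \ G').edgeSet) → V ⊕ (β ⊕ (G \ G').edgeSet) → Prop :=
    Relation.Map D' (Sum.map id Sum.inl) (Sum.map id Sum.inl)
  set D₂ : V ⊕ (β ⊕ (G \ G').edgeSet) → V ⊕ (β ⊕ (G \ G').edgeSet) → Prop :=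
    Relation.Map (incidenceDigraph (G \ G')) (Sum.map id Sum.inr) (Sum.map id Sum.inr)
  have hD₂ : ∀ a b, D₂ a b → (∃ x, a = .inl x) ∧ ∃ e, b = .inr (.inr e) := by
    rintro _ _ ⟨_, _, ⟨x, e, rfl, rfl, -⟩, rfl, rfl⟩
    exact ⟨⟨x, rfl⟩, e, rfl⟩
  have hD₁ : ∀ a b e, D₁ a b → a ≠ .inr (.inr e) ∧ b ≠ .inr (.inr e) := by
    rintro _ _ e ⟨a, b, -, rfl, rfl⟩
    constructor <;> rintro h <;> cases a <;> cases b <;> simp at h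
  refine ⟨D₁ ⊔ D₂, (hD'.map hinl).sup_of_isSink ?_, ?_⟩
  · rintro a b hab c (hbc | hbc)
    · obtain ⟨e, rfl⟩ := (hD₂ a b hab).2
      exact (hD₁ _ _ e hbc).1 rfl
    · obtain ⟨x, rfl⟩ := (hD₂ b c hbc).1
      obtain ⟨e, he⟩ := (hD₂ a _ hab).2
      cases he
  · have hdisj : ∀ x y v, D₁ x v → ¬ D₂ y v := by
      intro x y v hx hy
      obtain ⟨e, rfl⟩ := (hD₂ y v hy).2
      exact (hD₁ _ _ e hx).2 rfl
    have h := (hG'.map hinl).sup ((isCompetitionGraphOf_incidenceDigraph (G \ G')).map hinr) hdisj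
    rw [map_map, map_map] at h
    rw [(congrArg (SimpleGraph.map Sum.inl) (sup_sdiff_cancel_right hle).symm).trans
      (map_sup _ _ _)]
    exact h

theorem IsAcyclicCompetitionGraph.addIsolated_natCard [Finite β] {G : SimpleGraph V}
    (h : IsAcyclicCompetitionGraph (G.map (Sum.inl : V → V ⊕ β))) :
    IsAcyclicCompetitionGraph (addIsolated G (Nat.card β)) := by
  have hf : Injective (Sum.map (id : V → V) (Finite.equivFin β)) :=
    Sum.map_injective.mpr ⟨injective_id, (Finite.equivFin β).injective⟩
  rw [addIsolated_eq_map]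
  have := h.map hf
  rwa [map_map] at this

theorem isAcyclicCompetitionGraph_map_inl_bot :
    IsAcyclicCompetitionGraph ((⊥ : SimpleGraph V).map (Sum.inl : V → V ⊕ β)) := by
  refine ⟨⊥, fun a h => ?_, fun x y => ?_⟩
  · obtain ⟨_, h, -⟩ := Relation.TransGen.head'_iff.mp h
    exact h
  · simp [map_adj']

theorem competitionNumber_le_add_ncard_sdiff [Finite V] {G G' : SimpleGraph V} (hle : G' ≤ G) :
    competitionNumber G ≤ competitionNumber G' + (G.edgeSet \ G'.edgeSet).ncard := by
  -- `sInf ∅ = 0`, so first realize `G'` with one isolated vertex per edge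
  have hne : {k | IsAcyclicCompetitionGraph (addIsolated G' k)}.Nonempty :=
    ⟨_, ((isAcyclicCompetitionGraph_map_inl_bot (β := Empty)).map_inl_sup_sdiff
      bot_le).addIsolated_natCard⟩
  have hG' : IsAcyclicCompetitionGraph (addIsolated G' (competitionNumber G')) := Nat.sInf_mem hne
  rw [addIsolated_eq_map] at hG'
  calc competitionNumber G ≤ _ := Nat.sInf_le (hG'.map_inl_sup_sdiff hle).addIsolated_natCard
    _ = _ := by
      rw [Nat.card_sum, Nat.card_eq_fintype_card, Fintype.card_fin, edgeSet_sdiff,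
        Nat.card_coe_set_eq]

end Competition

section HoleSpace

variable {V : Type*} {G : SimpleGraph V}

theorem ZMod.ite_or_eq_ite_or_add_ite_or {A B C : Prop} [Decidable A] [Decidable B]
    [Decidable C] (hAB : ¬ (A ∧ B)) (hCA : ¬ (C ∧ A)) (hCB : ¬ (C ∧ B)) :
    (if A ∨ B then 1 else 0 : ZMod 2) =
      (if C ∨ B then 1 else 0) + (if C ∨ A then 1 else 0) := by
  by_cases A <;> by_cases B <;> by_cases C <;> simp_all; decide

theorem SimpleGraph.Walk.IsCycle.exists_split_of_chord_s10 {v x y : V} {c : G.Walk v v}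
    (hc : c.IsCycle) (hx : x ∈ c.support) (hy : y ∈ c.support) (hxy : G.Adj x y)
    (hchord : s(x, y) ∉ c.edges) :
    ∃ (c₁ : G.Walk x x) (c₂ : G.Walk y y), c₁.IsCycle ∧ c₂.IsCycle ∧
      c₁.length < c.length ∧ c₂.length < c.length ∧
      cycleVec G c = cycleVec G c₁ + cycleVec G c₂ := by
  classical
  set r := c.rotate x hx
  have hr : r.IsCycle := hc.rotate hx
  have hyr : y ∈ r.support := (c.mem_support_rotate_iff x hx).mpr hy
  set p := r.takeUntil y hyr
  set q := r.dropUntil y hyr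
  have hpq : p.append q = c.rotate x hx := r.take_spec hyr
  have hedges : ∀ e, e ∈ c.edges ↔ e ∈ p.edges ∨ e ∈ q.edges := fun e => by
    rw [← (c.rotate_edges x hx).mem_iff, ← hpq, edges_append, List.mem_append]
  have hp : p.IsPath := hr.isPath_takeUntil hyr
  have hq : q.IsPath := IsCycle.isPath_of_append_right (p := p) (not_nil_of_ne hxy.ne) (hpq ▸ hr)
  have hpq_disj : p.edges.Disjoint q.edges := hr.isTrail.disjoint_edges_takeUntil_dropUntil hyr
  have hp_chord : s(x, y) ∉ p.edges := fun h => hchord ((hedges _).mpr (.inl h))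
  have hq_chord : s(x, y) ∉ q.edges := fun h => hchord ((hedges _).mpr (.inr h))
  have hp_len : 2 ≤ p.length := by
    by_contra! h
    refine hp_chord ?_
    rw [eq_of_length_le_one (p := p) (q := hxy.toWalk) (by omega) (by simp)]
    simp
  have hq_len : 2 ≤ q.length := by
    by_contra! h
    refine hq_chord ?_
    rw [eq_of_length_le_one (p := q) (q := hxy.symm.toWalk) (by omega) (by simp)]
    simp [Sym2.eq_swap]
  have hlen : c.length = p.length + q.length := by
    rw [← c.length_rotate x hx, ← hpq, length_append]
  refine ⟨.cons hxy q, .cons hxy.symm p, (cons_isCycle_iff _ _).mpr ⟨hq, hq_chord⟩,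
    (cons_isCycle_iff _ _).mpr ⟨hp, by rwa [Sym2.eq_swap]⟩, by simp only [length_cons]; omega,
    by simp only [length_cons]; omega, ?_⟩
  ext e
  simp only [cycleVec, Pi.add_apply, edges_cons, List.mem_cons, hedges, Sym2.eq_swap (a := y)]
  -- the chord lies on both new cycles and cancels mod 2
  exact ZMod.ite_or_eq_ite_or_add_ite_or (fun h => hpq_disj h.1 h.2)
    (fun h => hp_chord (h.1 ▸ h.2)) (fun h => hq_chord (h.1 ▸ h.2))

theorem SimpleGraph.Walk.exists_edges_eq_of_length_eq_three {u : V} (c : G.Walk u u)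
    (h : c.length = 3) :
    ∃ x y, G.Adj u x ∧ G.Adj x y ∧ G.Adj y u ∧ c.edges = [s(u, x), s(x, y), s(y, u)] := by
  rcases c with _ | ⟨h₁, _ | ⟨h₂, _ | ⟨h₃, _ | ⟨_, _⟩⟩⟩⟩ <;> simp at h
  exact ⟨_, _, h₁, h₂, h₃, rfl⟩

theorem cycleVec_mem_of_isCycle {W : Submodule (ZMod 2) (G.edgeSet → ZMod 2)}
    (hholes : holeSpace G ≤ W)
    (htriangles : ∀ (u : V) (c : G.Walk u u), c.IsCycle → c.length = 3 → cycleVec G c ∈ W)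
    {v : V} {c : G.Walk v v} (hc : c.IsCycle) : cycleVec G c ∈ W := by
  induction hn : c.length using Nat.strong_induction_on generalizing v with
  | _ n ih =>
    by_cases! hchord : ∃ x y, x ∈ c.support ∧ y ∈ c.support ∧ G.Adj x y ∧ s(x, y) ∉ c.edges
    · obtain ⟨x, y, hx, hy, hxy, hxy'⟩ := hchord
      obtain ⟨c₁, c₂, hc₁, hc₂, hlen₁, hlen₂, hsplit⟩ := hc.exists_split_of_chord_s10 hx hy hxy hxy'
      rw [hsplit]
      exact add_mem (ih _ (hn ▸ hlen₁) hc₁ rfl) (ih _ (hn ▸ hlen₂) hc₂ rfl)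
    · rcases (show 4 ≤ c.length ∨ c.length = 3 by have := hc.three_le_length; omega)
        with hlen | hlen
      · exact hholes (Submodule.subset_span ⟨v, c, ⟨hc, hlen, hchord⟩, rfl⟩)
      · exact htriangles v c hc hlen

theorem SimpleGraph.Walk.edges_subset_edgeSet_of_length_eq_three {G' : SimpleGraph V}
    (htri : ∀ x y z : V, G.Adj x y → G.Adj x z → G.Adj y z → G'.Adj x y) {u : V}
    (c : G.Walk u u) (h : c.length = 3) : ∀ e ∈ c.edges, e ∈ G'.edgeSet := by
  obtain ⟨x, y, hux, hxy, hyu, hedges⟩ := c.exists_edges_eq_of_length_eq_three h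
  simp only [hedges, List.mem_cons, List.not_mem_nil, or_false]
  rintro e (rfl | rfl | rfl)
  exacts [htri u x y hux hyu.symm hxy, htri x y u hxy hux.symm hyu, htri y u x hyu hxy.symm hux]

theorem SimpleGraph.Connected.exists_isCycle_of_adj {G' : SimpleGraph V} (hle : G' ≤ G)
    (hconn' : G'.Connected) {a b : V} (hab : G.Adj a b) (hab' : ¬ G'.Adj a b) :
    ∃ c : G.Walk a a, c.IsCycle ∧ s(a, b) ∈ c.edges ∧
      ∀ e ∈ c.edges, e ≠ s(a, b) → e ∈ G'.edgeSet := by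
  classical
  let P : G'.Path b a := (hconn' b a).some.toPath
  have hP : ∀ e ∈ ((P : G'.Walk b a).mapLe hle).edges, e ∈ G'.edgeSet := fun e he =>
    (P : G'.Walk b a).edges_subset_edgeSet (by rwa [Walk.edges_mapLe_eq_edges] at he)
  refine ⟨.cons hab ((P : G'.Walk b a).mapLe hle), (Walk.cons_isCycle_iff _ _).mpr
    ⟨(Walk.isPath_mapLe hle).mpr P.2, fun h => hab' (hP _ h)⟩,
    List.mem_cons_self, fun e he hne => hP e ?_⟩
  simpa [hne] using he

theorem ncard_edgeSet_sdiff_le_holeDim [Finite V] {G' : SimpleGraph V} (hle : G' ≤ G)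
    (hconn' : G'.Connected)
    (htri : ∀ x y z : V, G.Adj x y → G.Adj x z → G.Adj y z → G'.Adj x y) :
    (G.edgeSet \ G'.edgeSet).ncard ≤ holeDim G := by
  classical
  set T := G.edgeSet \ G'.edgeSet
  let π : (G.edgeSet → ZMod 2) →ₗ[ZMod 2] (T → ZMod 2) :=
    LinearMap.funLeft (ZMod 2) (ZMod 2) (Set.inclusion Set.sdiff_subset)
  have hcycles : ∀ (v : V) (c : G.Walk v v), c.IsCycle →
      cycleVec G c ∈ holeSpace G ⊔ LinearMap.ker π := by
    intro v c hc
    refine cycleVec_mem_of_isCycle le_sup_left (fun u t _ ht => ?_) hc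
    refine Submodule.mem_sup_right (LinearMap.mem_ker.mpr (funext fun e => ?_))
    simp only [π, LinearMap.funLeft_apply, cycleVec, Pi.zero_apply]
    exact if_neg fun h => e.2.2 (t.edges_subset_edgeSet_of_length_eq_three htri ht _ h)
  have hsingle : ∀ t : T, Pi.single t 1 ∈ (holeSpace G).map π := by
    rintro ⟨e, he, he'⟩
    induction e using Sym2.ind with | _ a b => ?_
    obtain ⟨c, hc, habc, hcG'⟩ := hconn'.exists_isCycle_of_adj hle he he'
    obtain ⟨h, hh, k, hk, hsum⟩ := Submodule.mem_sup.mp (hcycles a c hc)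
    refine ⟨h, hh, ?_⟩
    rw [← add_zero (π h), ← LinearMap.mem_ker.mp hk, ← map_add, hsum]
    ext j
    simp only [π, LinearMap.funLeft_apply, cycleVec, Pi.single_apply, Subtype.ext_iff]
    refine if_congr ⟨fun hj => ?_, fun hj => hj ▸ habc⟩ rfl rfl
    by_contra hne
    exact j.2.2 (hcG' _ hj hne)
  have hsurj : (holeSpace G).map π = ⊤ := by
    rw [eq_top_iff, ← (Pi.basisFun (ZMod 2) T).span_eq, Submodule.span_le]
    rintro _ ⟨t, rfl⟩
    simpa using hsingle t
  have := Fintype.ofFinite T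
  calc T.ncard = Module.finrank (ZMod 2) (T → ZMod 2) := by
        rw [Module.finrank_fintype_fun_eq_card, ← Nat.card_eq_fintype_card, Nat.card_coe_set_eq]
    _ = Module.finrank (ZMod 2) ((holeSpace G).map π) := by rw [hsurj, finrank_top]
    _ ≤ holeDim G := Submodule.finrank_map_le π _

end HoleSpace

theorem stmt10_general {V : Type*} [Fintype V] (G G' : SimpleGraph V)
    (hle : G' ≤ G) (hconn' : G'.Connected)
    (htri : ∀ x y z : V, G.Adj x y → G.Adj x z → G.Adj y z → G'.Adj x y)
    (hk : competitionNumber G' = 1) :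
    competitionNumber G ≤ holeDim G + 1 := by
  have hcomp := competitionNumber_le_add_ncard_sdiff hle
  have hholes := ncard_edgeSet_sdiff_le_holeDim hle hconn' htri
  omega

/-- Let `G` be a connected graph having a connected spanning
subgraph `G'` which contains all the triangles of `G` and has competition
number 1. Then `k(G) ≤ dim H(G) + 1`. -/
theorem stmt10 {V : Type*} [Fintype V] (G G' : SimpleGraph V)
    (hconn : G.Connected) (hle : G' ≤ G) (hconn' : G'.Connected)
    (htri : ∀ x y z : V, G.Adj x y → G.Adj x z → G.Adj y z → G'.Adj x y)
    (hk : competitionNumber G' = 1) :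
    competitionNumber G ≤ holeDim G + 1 :=
  stmt10_general G G' hle hconn' htri hk
end

section
/- Let G be a connected graph with at most three triangles that has at least one triangle, and let H be the subgraph of G induced by the edges of the triangles of G. Then H is chordal. -/
open SimpleGraph

/-- The subgraph of `G` induced by the edges of the triangles of `G`: its edges
are exactly the edges of `G` lying on some triangle. -/
def triangleEdgeSubgraph {V : Type*} (G : SimpleGraph V) : SimpleGraph V where
  Adj x y := G.Adj x y ∧ ∃ z : V, G.Adj x z ∧ G.Adj y z
  symm := by
    constructor
    rintro x y ⟨hxy, z, hxz, hyz⟩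
    exact ⟨hxy.symm, z, hyz, hxz⟩
  loopless := by
    constructor
    rintro x ⟨hxx, -⟩
    exact G.irrefl hxx


/-!
Every edge of a hole `C` of `H = triangleEdgeSubgraph G` lies on a triangle of `G`, and `C` has at
least four edges but `G` at most three triangles, so two distinct edges of `C` lie on one triangle
`T`. Two distinct edges of a triangle cover its three vertices, so all of `T` lies on `C`; since
`T` is also a triangle of `H` and `C` is induced, all three edges of `T` are edges of `C`, which
forces `C` to be the triangle itself, contradicting that it has length at least four.
-/

namespace SimpleGraph.Walk

variable {V : Type*} {G : SimpleGraph V} {v x y z u a b c : V} {w : G.Walk v v}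

theorem IsCycle.eq_or_eq_of_mem_edges (hw : w.IsCycle) (hyz : y ≠ z)
    (hy : s(x, y) ∈ w.edges) (hz : s(x, z) ∈ w.edges) (hu : s(x, u) ∈ w.edges) :
    u = y ∨ u = z := by
  by_contra! h
  have hsub : {u, y, z} ⊆ w.toSubgraph.neighborSet x := by
    simp only [Set.insert_subset_iff, Set.singleton_subset_iff, Subgraph.mem_neighborSet,
      adj_toSubgraph_iff_mem_edges]
    exact ⟨hu, hy, hz⟩
  have hcard := Set.ncard_le_ncard hsub w.finite_neighborSet_toSubgraph
  rw [Set.ncard_insert_of_notMem (by simp [h.1, h.2]), Set.ncard_pair hyz,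
    hw.ncard_neighborSet_toSubgraph_eq_two (w.fst_mem_support_of_mem_edges hy)] at hcard
  omega

theorem IsCycle.length_eq_three_of_mem_edges (hw : w.IsCycle) (hab : a ≠ b) (hac : a ≠ c)
    (hbc : b ≠ c) (h₁ : s(a, b) ∈ w.edges) (h₂ : s(b, c) ∈ w.edges) (h₃ : s(a, c) ∈ w.edges) :
    w.length = 3 := by
  classical
  set S : Finset V := {a, b, c}
  -- each of `a`, `b`, `c` already has its two cycle neighbours inside `S`
  have hclosed : ∀ d ∈ w.darts, d.fst ∈ S → d.snd ∈ S := by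
    intro d hd hfst
    have hd : s(d.fst, d.snd) ∈ w.edges := List.mem_map_of_mem hd
    simp only [S, Finset.mem_insert, Finset.mem_singleton] at hfst ⊢
    rcases hfst with h | h | h <;> rw [h] at hd
    · have := hw.eq_or_eq_of_mem_edges hbc h₁ h₃ hd; tauto
    · have := hw.eq_or_eq_of_mem_edges hac (Sym2.eq_swap ▸ h₁) h₂ hd; tauto
    · have := hw.eq_or_eq_of_mem_edges hab (Sym2.eq_swap ▸ h₃) (Sym2.eq_swap ▸ h₂) hd; tauto
  have ha : a ∈ w.support := w.fst_mem_support_of_mem_edges h₁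
  have hsupport : ∀ u ∈ w.support, u ∈ S := by
    intro u hu
    by_contra huS
    have hu' := (w.mem_support_rotate_iff a ha).2 hu
    obtain ⟨d, hd, hfst, hsnd⟩ :=
      ((w.rotate a ha).takeUntil u hu').exists_boundary_dart S (by simp [S]) huS
    have hd : d ∈ w.darts :=
      (w.rotate_darts a ha).mem_iff.1 ((w.rotate a ha).darts_takeUntil_subset_darts hu' hd)
    exact hsnd (hclosed d hd hfst)
  have hle : w.support.tail.length ≤ S.card := by
    rw [← List.toFinset_card_of_nodup hw.support_nodup]
    exact Finset.card_le_card fun u hu ↦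
      hsupport u (List.mem_of_mem_tail (List.mem_toFinset.1 hu))
  have := hw.three_le_length
  have : S.card ≤ 3 := Finset.card_le_three
  simp only [List.length_tail, length_support, Nat.add_sub_cancel] at hle
  omega

end SimpleGraph.Walk

namespace Finset

variable {α : Type*} {s : Finset α} {e₁ e₂ : Sym2 α}

theorem eq_of_mem_sym2_of_card_eq_two (hs : #s = 2) (h₁ : e₁ ∈ s.sym2) (h₂ : e₂ ∈ s.sym2)
    (hd₁ : ¬e₁.IsDiag) (hd₂ : ¬e₂.IsDiag) : e₁ = e₂ := by
  classical
  obtain ⟨x, y, -, rfl⟩ := card_eq_two.1 hs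
  induction e₁ using Sym2.ind
  induction e₂ using Sym2.ind
  simp only [mk_mem_sym2_iff, mem_insert, mem_singleton, Sym2.mk_isDiag_iff] at *
  aesop

theorem mem_or_mem_of_mem_sym2_of_card_eq_three (hs : #s = 3) (h₁ : e₁ ∈ s.sym2)
    (h₂ : e₂ ∈ s.sym2) (hd₁ : ¬e₁.IsDiag) (hd₂ : ¬e₂.IsDiag) (hne : e₁ ≠ e₂) {v : α}
    (hv : v ∈ s) : v ∈ e₁ ∨ v ∈ e₂ := by
  classical
  by_contra! h
  have hsym2 {e : Sym2 α} (he : e ∈ s.sym2) (hve : v ∉ e) : e ∈ (s.erase v).sym2 :=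
    mem_sym2_iff.2 fun u hu ↦ mem_erase.2 ⟨ne_of_mem_of_not_mem hu hve, mem_sym2_iff.1 he u hu⟩
  exact hne <| eq_of_mem_sym2_of_card_eq_two (by rw [card_erase_of_mem hv, hs])
    (hsym2 h₁ h.1) (hsym2 h₂ h.2) hd₁ hd₂

end Finset

namespace IsHole

variable {V : Type*} {G : SimpleGraph V} {v : V} {w : G.Walk v v} {t : Finset V}

theorem exists_notMem_support_of_isNClique (hw : IsHole G w) (ht : G.IsNClique 3 t) :
    ∃ u ∈ t, u ∉ w.support := by
  classical
  obtain ⟨a, b, c, hab, hac, hbc, rfl⟩ := is3Clique_iff.1 ht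
  by_contra! h
  have hchord {x y : V} (hx : x ∈ ({a, b, c} : Finset V)) (hy : y ∈ ({a, b, c} : Finset V))
      (hxy : G.Adj x y) : s(x, y) ∈ w.edges :=
    hw.2.2 x y (h x hx) (h y hy) hxy
  have := hw.1.length_eq_three_of_mem_edges hab.ne hac.ne hbc.ne
    (hchord (by simp) (by simp) hab) (hchord (by simp) (by simp) hbc)
    (hchord (by simp) (by simp) hac)
  have := hw.2.1
  omega

theorem eq_of_mem_edges_of_mem_sym2 (hw : IsHole G w) (ht : G.IsNClique 3 t)
    {e₁ e₂ : Sym2 V} (he₁ : e₁ ∈ w.edges) (he₂ : e₂ ∈ w.edges) (h₁ : e₁ ∈ t.sym2)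
    (h₂ : e₂ ∈ t.sym2) : e₁ = e₂ := by
  by_contra hne
  obtain ⟨u, hut, hu⟩ := hw.exists_notMem_support_of_isNClique ht
  have hdiag {e : Sym2 V} (he : e ∈ w.edges) : ¬e.IsDiag :=
    G.not_isDiag_of_mem_edgeSet (w.edges_subset_edgeSet he)
  rcases Finset.mem_or_mem_of_mem_sym2_of_card_eq_three ht.card_eq h₁ h₂ (hdiag he₁)
    (hdiag he₂) hne hut with h | h
  · exact hu (w.mem_support_of_mem_edges he₁ h)
  · exact hu (w.mem_support_of_mem_edges he₂ h)

end IsHole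

namespace SimpleGraph

variable {V : Type*} {G : SimpleGraph V}

theorem isNClique_triangleEdgeSubgraph {t : Finset V} (ht : G.IsNClique 3 t) :
    (triangleEdgeSubgraph G).IsNClique 3 t := by
  classical
  obtain ⟨a, b, c, hab, hac, hbc, rfl⟩ := is3Clique_iff.1 ht
  exact is3Clique_iff.2 ⟨a, b, c, ⟨hab, c, hac, hbc⟩, ⟨hac, b, hab, hbc.symm⟩,
    ⟨hbc, a, hab.symm, hac.symm⟩, rfl⟩

theorem exists_isNClique_three_mem_sym2_of_mem_edgeSet {e : Sym2 V}
    (he : e ∈ (triangleEdgeSubgraph G).edgeSet) : ∃ t : Finset V, G.IsNClique 3 t ∧ e ∈ t.sym2 := by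
  classical
  induction e using Sym2.ind with
  | _ x y =>
  obtain ⟨hxy, z, hxz, hyz⟩ := he
  exact ⟨{x, y, z}, is3Clique_iff.2 ⟨x, y, z, hxy, hxz, hyz, rfl⟩, by simp⟩

theorem Walk.IsTrail.exists_ne_mem_sym2_of_ncard_lt_length [Finite V] {v : V}
    {w : (triangleEdgeSubgraph G).Walk v v} (hw : w.IsTrail)
    (hlt : {s : Finset V | G.IsNClique 3 s}.ncard < w.length) :
    ∃ e₁ ∈ w.edges, ∃ e₂ ∈ w.edges, e₁ ≠ e₂ ∧
      ∃ t : Finset V, G.IsNClique 3 t ∧ e₁ ∈ t.sym2 ∧ e₂ ∈ t.sym2 := by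
  classical
  have htriangle (e : Sym2 V) :
      ∃ t : Finset V, e ∈ w.edges → G.IsNClique 3 t ∧ e ∈ t.sym2 := by
    by_cases he : e ∈ w.edges
    · simpa [he] using exists_isNClique_three_mem_sym2_of_mem_edgeSet (w.edges_subset_edgeSet he)
    · exact ⟨∅, fun h ↦ (he h).elim⟩
  choose f hf using htriangle
  have hfin := Set.toFinite {s : Finset V | G.IsNClique 3 s}
  have hcard : hfin.toFinset.card < w.edges.toFinset.card := by
    rwa [← Set.ncard_eq_toFinset_card _ hfin, List.toFinset_card_of_nodup hw.edges_nodup,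
      Walk.length_edges]
  obtain ⟨e₁, he₁, e₂, he₂, hne, heq⟩ := Finset.exists_ne_map_eq_of_card_lt_of_maps_to hcard
    (f := f) fun e he ↦ by simpa using (hf e (List.mem_toFinset.1 he)).1
  rw [List.mem_toFinset] at he₁ he₂
  exact ⟨e₁, he₁, e₂, he₂, hne, f e₁, (hf e₁ he₁).1, (hf e₁ he₁).2, heq ▸ (hf e₂ he₂).2⟩

end SimpleGraph

theorem stmt14_general {V : Type*} [Fintype V] (G : SimpleGraph V)
    (htri : {s : Finset V | G.IsNClique 3 s}.ncard ≤ 3) :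
    IsChordalGraph (triangleEdgeSubgraph G) := by
  intro v w hw
  obtain ⟨e₁, he₁, e₂, he₂, hne, t, ht, h₁, h₂⟩ :=
    hw.1.isTrail.exists_ne_mem_sym2_of_ncard_lt_length (by have := hw.2.1; omega)
  exact hne (IsHole.eq_of_mem_edges_of_mem_sym2 hw (isNClique_triangleEdgeSubgraph ht)
    he₁ he₂ h₁ h₂)

/-- Let `G` be a connected graph with at most three triangles
having at least one triangle, and let `H` be the subgraph of `G` induced by the
edges of the triangles of `G`. Then `H` is chordal. -/
theorem stmt14 {V : Type*} [Fintype V] (G : SimpleGraph V)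
    (hconn : G.Connected) (htri : {s : Finset V | G.IsNClique 3 s}.ncard ≤ 3)
    (hex : ∃ x y z : V, G.Adj x y ∧ G.Adj x z ∧ G.Adj y z) :
    IsChordalGraph (triangleEdgeSubgraph G) :=
  stmt14_general G htri
end

section
/- Let G be a connected graph such that for every hole C of G there exists an edge e_C ∈ E(C) that belongs to no other induced cycle of G. Then the competition number of G satisfies k(G) ≤ dim H(G) + 1. -/
open SimpleGraph

/-!
Choose in every hole `C` its private edge `e_C`, and let `F` be the set of these edges. Deleting
`F` leaves a chordal graph: a hole of `G - F` has a chord in `G` (otherwise it is a hole of `G`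
avoiding `F`), that chord is some `e_C`, but a chord of a cycle lies on two different induced
cycles. A chordal graph has competition number at most one (Roberts: let the closed later
neighbourhoods along a perfect elimination ordering, which exists by Dirac's lemma, prey on the
preceding vertex), and every edge of `F` costs one more isolated vertex, so
`k(G) ≤ |F| + 1 ≤ #holes + 1`. Finally, each hole owns a coordinate of `𝔽₂^{E(G)}`, its private
edge, where all other holes vanish, so the characteristic vectors of the holes are linearly
independent and `#holes ≤ dim H(G)`.
-/

lemma List.Nodup.le_idxOf_of_mem_drop {α : Type*} [DecidableEq α] {l : List α} (hl : l.Nodup)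
    {n : ℕ} {x : α} (hx : x ∈ l.drop n) : n ≤ l.idxOf x := by
  obtain ⟨j, hj, rfl⟩ := List.mem_drop_iff_getElem.mp hx
  rw [hl.idxOf_getElem]
  omega

lemma List.getElem_mem_drop {α : Type*} {l : List α} {i j : ℕ} (hij : i ≤ j)
    (hj : j < l.length) : l[j] ∈ l.drop i :=
  List.mem_drop_iff_getElem.mpr ⟨j - i, by omega, by simp [Nat.add_sub_cancel' hij]⟩

namespace SimpleGraph.Walk

variable {V : Type*} {G : SimpleGraph V}

lemma exists_append_append_of_mem_support {x y u w : V} (p : G.Walk x y)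
    (hu : u ∈ p.support) (hw : w ∈ p.support) :
    (∃ (a : G.Walk x u) (r : G.Walk u w) (b : G.Walk w y), p = a.append (r.append b)) ∨
      ∃ (a : G.Walk x w) (r : G.Walk w u) (b : G.Walk u y), p = a.append (r.append b) := by
  obtain ⟨q, b, rfl⟩ := mem_support_iff_exists_append.mp hu
  rcases (mem_support_append_iff _ _).mp hw with hw | hw
  · obtain ⟨a, r, rfl⟩ := mem_support_iff_exists_append.mp hw
    exact .inr ⟨a, r, b, (append_assoc _ _ _).symm⟩
  · obtain ⟨r, b, rfl⟩ := mem_support_iff_exists_append.mp hw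
    exact .inl ⟨q, r, b, rfl⟩

lemma length_append_cons_lt {x y u w : V} (a : G.Walk x u) (r : G.Walk u w) (b : G.Walk w y)
    (huw : G.Adj u w) (hr : s(u, w) ∉ r.edges) :
    (a.append (cons huw b)).length < (a.append (r.append b)).length := by
  have h0 : r.length ≠ 0 := fun h => huw.ne (eq_of_length_eq_zero h)
  have h1 : r.length ≠ 1 := by
    intro h
    cases r with
    | nil => simp at h
    | cons h' r' =>
      obtain rfl := eq_of_length_eq_zero (by simpa using h : r'.length = 0)
      simp at hr
  simp only [length_append, length_cons]
  omega

lemma support_append_cons_subset {x y u w : V} (a : G.Walk x u) (r : G.Walk u w)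
    (b : G.Walk w y) (huw : G.Adj u w) :
    (a.append (cons huw b)).support ⊆ (a.append (r.append b)).support := by
  intro z hz
  simp only [mem_support_append_iff, support_cons, List.mem_cons] at hz ⊢
  rcases hz with hz | rfl | hz
  · exact .inl hz
  · exact .inl a.end_mem_support
  · exact .inr (.inr hz)

/-- A shortest walk from `x` to `y` inside the vertex set of `p` is a chordless path. -/
theorem exists_isPath_isChordless {x y : V} (p : G.Walk x y) :
    ∃ q : G.Walk x y, q.IsPath ∧ q.IsChordless ∧ q.support ⊆ p.support := by
  classical
  have hex : ∃ n, ∃ q : G.Walk x y, q.support ⊆ p.support ∧ q.length = n :=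
    ⟨_, p, List.Subset.refl _, rfl⟩
  obtain ⟨q₀, hq₀, hlen⟩ := Nat.find_spec hex
  set q := q₀.bypass
  have hqp : q.support ⊆ p.support := List.Subset.trans q₀.support_bypass_subset_support hq₀
  have hmin : ∀ r : G.Walk x y, r.support ⊆ q.support → q.length ≤ r.length := fun r hr =>
    q₀.length_bypass_le_length.trans (hlen ▸ Nat.find_min' hex ⟨r, List.Subset.trans hr hqp, rfl⟩)
  refine ⟨q, q₀.bypass_isPath, isChordless_iff_forall_mem_edges.mpr ?_, hqp⟩
  intro u w hu hw huw
  by_contra hne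
  rcases exists_append_append_of_mem_support q hu hw with ⟨a, r, b, hq⟩ | ⟨a, r, b, hq⟩
  · have hr : s(u, w) ∉ r.edges := fun h => hne (by simp [hq, edges_append, h])
    have := hmin _ (hq ▸ support_append_cons_subset a r b huw)
    have := hq ▸ length_append_cons_lt a r b huw hr
    omega
  · have hr : s(w, u) ∉ r.edges := fun h => hne (by simp [hq, edges_append, Sym2.eq_swap ▸ h])
    have := hmin _ (hq ▸ support_append_cons_subset a r b huw.symm)
    have := hq ▸ length_append_cons_lt a r b huw.symm hr
    omega

lemma isInducedCycle_cons_mapLe {x y : V} (hxy : G.Adj x y)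
    {R : (G.deleteEdges {s(x, y)}).Walk y x} (hR : R.IsPath) (hRc : R.IsChordless) :
    IsInducedCycle G (cons hxy (R.mapLe (G.deleteEdges_le _))) := by
  refine ⟨(cons_isCycle_iff _ _).mpr ⟨(isPath_mapLe _).mpr hR, ?_⟩, ?_⟩
  · rw [edges_mapLe_eq_edges]
    intro h
    simpa using R.edges_subset_edgeSet h
  · intro u w hu hw huw
    have hsupp : ∀ {z}, z ∈ (cons hxy (R.mapLe (G.deleteEdges_le _))).support → z ∈ R.support := by
      intro z hz
      rw [support_cons, support_mapLe_eq_support, List.mem_cons] at hz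
      exact hz.elim (· ▸ R.end_mem_support) id
    rw [edges_cons, List.mem_cons, edges_mapLe_eq_edges]
    by_cases he : s(u, w) = s(x, y)
    · exact .inl he
    · exact .inr (hRc.mem_edges (hsupp hu) (hsupp hw) (deleteEdges_adj.mpr ⟨huw, he⟩))

lemma IsCycle.eq_or_eq_of_mem_takeUntil_of_mem_dropUntil [DecidableEq V] {x y z : V}
    {c : G.Walk x x} (hc : c.IsCycle) (hy : y ∈ c.support)
    (h₁ : z ∈ (c.takeUntil y hy).support) (h₂ : z ∈ (c.dropUntil y hy).support) :
    z = x ∨ z = y := by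
  by_contra! hz
  have hnodup := hc.support_nodup
  rw [← c.take_spec hy, tail_support_append, List.nodup_append] at hnodup
  rw [← cons_tail_support, List.mem_cons] at h₁ h₂
  exact hnodup.2.2 z (h₁.resolve_left hz.1) z (h₂.resolve_left hz.2) rfl

/-- The chord `xy` cuts the cycle into two arcs; a chordless path from `y` to `x` inside
either arc, closed up by `xy`, is an induced cycle, and the two are different. -/
theorem IsCycle.exists_isInducedCycle_of_chord {v x y : V} {C : G.Walk v v} (hC : C.IsCycle)
    (hx : x ∈ C.support) (hy : y ∈ C.support) (hxy : G.Adj x y) (hchord : s(x, y) ∉ C.edges) :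
    ∃ Z₁ Z₂ : G.Walk x x, IsInducedCycle G Z₁ ∧ IsInducedCycle G Z₂ ∧
      s(x, y) ∈ Z₁.edges ∧ s(x, y) ∈ Z₂.edges ∧ ∃ e ∈ Z₁.edges, e ∉ Z₂.edges := by
  classical
  set c := C.rotate x hx
  have hyc : y ∈ c.support := (mem_support_rotate_iff _ _ _).mpr hy
  have hce : ∀ e ∈ c.edges, e ≠ s(x, y) := fun e he h =>
    hchord (h ▸ (rotate_edges C x hx).perm.mem_iff.mp he)
  set P₁ := c.takeUntil y hyc
  set P₂ := c.dropUntil y hyc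
  obtain ⟨R₁, hR₁, hR₁c, hR₁s⟩ := exists_isPath_isChordless
    (P₁.reverse.toDeleteEdge s(x, y) fun h => hce _
      (c.edges_takeUntil_subset_edges hyc (by simpa using h)) rfl)
  obtain ⟨R₂, hR₂, hR₂c, hR₂s⟩ := exists_isPath_isChordless
    (P₂.toDeleteEdge s(x, y) fun h => hce _ (c.edges_dropUntil_subset_edges hyc h) rfl)
  refine ⟨_, _, isInducedCycle_cons_mapLe hxy hR₁ hR₁c,
    isInducedCycle_cons_mapLe hxy hR₂ hR₂c,
    by simp, by simp, ?_⟩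
  cases R₁ with
  | nil => exact absurd rfl hxy.ne
  | @cons _ z _ h₁ R₁' =>
    refine ⟨s(y, z), by simp, fun hz => ?_⟩
    have hzx : z ≠ x := by
      rintro rfl
      simp [Sym2.eq_swap] at h₁
    have hz₁ : z ∈ P₁.support := by
      simpa using hR₁s (by simp : z ∈ (cons h₁ R₁').support)
    have hz₂ : z ∈ P₂.support := by
      rw [edges_cons, List.mem_cons, edges_mapLe_eq_edges] at hz
      rcases hz with hz | hz
      · simp [hxy.ne.symm] at hz
        exact absurd hz hzx
      · simpa using hR₂s (R₂.snd_mem_support_of_mem_edges hz)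
    have := (hC.rotate hx).eq_or_eq_of_mem_takeUntil_of_mem_dropUntil hyc hz₁ hz₂
    exact this.elim hzx h₁.ne.symm

lemma two_le_length_of_not_adj {x y : V} (p : G.Walk x y) (hne : x ≠ y) (hxy : ¬G.Adj x y) :
    2 ≤ p.length := by
  have h0 : p.length ≠ 0 := fun h => hne (eq_of_length_eq_zero h)
  have h1 : p.length ≠ 1 := fun h => hxy (adj_of_length_eq_one h)
  omega

theorem isHole_append {x y : V} {A B : Set V} {p : G.Walk x y} {q : G.Walk y x}
    (hp : p.IsPath) (hq : q.IsPath) (hpc : p.IsChordless) (hqc : q.IsChordless)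
    (hpA : ∀ z ∈ p.support, z = x ∨ z = y ∨ z ∈ A) (hqB : ∀ z ∈ q.support, z = x ∨ z = y ∨ z ∈ B)
    (hAB : Disjoint A B) (hadjAB : ∀ u ∈ A, ∀ w ∈ B, ¬G.Adj u w)
    (hne : x ≠ y) (hxy : ¬G.Adj x y) : IsHole G (p.append q) := by
  have hp2 := p.two_le_length_of_not_adj hne hxy
  have hq2 := q.two_le_length_of_not_adj hne.symm (hxy ∘ G.adj_symm)
  have hxp : x ∉ p.support.tail := (List.nodup_cons.mp (p.cons_tail_support ▸ hp.support_nodup)).1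
  have hyq : y ∉ q.support.tail := (List.nodup_cons.mp (q.cons_tail_support ▸ hq.support_nodup)).1
  have hcross : ∀ u w, u ∈ p.support → w ∈ q.support → G.Adj u w →
      s(u, w) ∈ p.edges ∨ s(u, w) ∈ q.edges := by
    intro u w hu hw huw
    by_cases hu' : u ∈ q.support
    · exact .inr (hqc.mem_edges hu' hw huw)
    by_cases hw' : w ∈ p.support
    · exact .inl (hpc.mem_edges hu hw' huw)
    have huA : u ∈ A := by
      rcases hpA u hu with rfl | rfl | h
      exacts [absurd q.end_mem_support hu', absurd q.start_mem_support hu', h]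
    have hwB : w ∈ B := by
      rcases hqB w hw with rfl | rfl | h
      exacts [absurd p.start_mem_support hw', absurd p.end_mem_support hw', h]
    exact absurd huw (hadjAB u huA w hwB)
  refine ⟨hp.isCycle_append hq (List.disjoint_left.mpr fun {z} hzp hzq => ?_) (.inl hp2),
    by simp only [length_append]; omega, fun u w hu hw huw => ?_⟩
  · have hzA : z ∈ A := by
      rcases hpA z (List.mem_of_mem_tail hzp) with rfl | rfl | h
      exacts [absurd hzp hxp, absurd hzq hyq, h]
    have hzB : z ∈ B := by
      rcases hqB z (List.mem_of_mem_tail hzq) with rfl | rfl | h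
      exacts [absurd hzp hxp, absurd hzq hyq, h]
    exact hAB.ne_of_mem hzA hzB rfl
  · rw [edges_append, List.mem_append]
    rw [mem_support_append_iff] at hu hw
    rcases hu with hu | hu <;> rcases hw with hw | hw
    · exact .inl (hpc.mem_edges hu hw huw)
    · exact hcross u w hu hw huw
    · simpa [Sym2.eq_swap] using hcross w u hw hu huw.symm
    · exact .inr (hqc.mem_edges hu hw huw)

end SimpleGraph.Walk

section Simplicial

open Walk

variable {V : Type*} {H : SimpleGraph V}

def IsSimplicialIn (H : SimpleGraph V) (S : Set V) (v : V) : Prop :=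
  H.IsClique (H.neighborSet v ∩ S)

def ReachableIn (H : SimpleGraph V) (S : Set V) (a b : V) : Prop :=
  ∃ p : H.Walk a b, ∀ z ∈ p.support, z ∈ S

namespace ReachableIn

variable {S : Set V} {a b c : V}

lemma refl (ha : a ∈ S) : ReachableIn H S a a := ⟨.nil, by simpa using ha⟩

lemma symm (h : ReachableIn H S a b) : ReachableIn H S b a :=
  let ⟨p, hp⟩ := h
  ⟨p.reverse, fun z hz => hp z (by simpa using hz)⟩

lemma trans (h₁ : ReachableIn H S a b) (h₂ : ReachableIn H S b c) : ReachableIn H S a c :=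
  let ⟨p, hp⟩ := h₁
  let ⟨q, hq⟩ := h₂
  ⟨p.append q, fun z hz => ((mem_support_append_iff _ _).mp hz).elim (hp z) (hq z)⟩

lemma mem_right (h : ReachableIn H S a b) : b ∈ S :=
  let ⟨p, hp⟩ := h
  hp b p.end_mem_support

lemma adj (h : ReachableIn H S a b) (hbc : H.Adj b c) (hc : c ∈ S) : ReachableIn H S a c :=
  h.trans ⟨hbc.toWalk, by simp [h.mem_right, hc]⟩

lemma of_mem_support [DecidableEq V] {p : H.Walk a b} (hp : ∀ z ∈ p.support, z ∈ S)
    (hc : c ∈ p.support) : ReachableIn H S a c :=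
  ⟨p.takeUntil c hc, fun z hz => hp z (p.support_takeUntil_subset_support hc hz)⟩

end ReachableIn

lemma not_reachableIn_pair {a b : V} (hab : a ≠ b) (hnadj : ¬H.Adj a b) :
    ¬ReachableIn H {a, b} a b := by
  rintro ⟨p, hp⟩
  cases p with
  | nil => exact hab rfl
  | cons h q =>
    rcases hp _ (List.mem_cons_of_mem _ q.start_mem_support) with h' | h'
    exacts [h.ne h'.symm, hnadj (h' ▸ h)]

variable [DecidableEq V]

structure IsMinimalSeparator (H : SimpleGraph V) (s T : Finset V) (a b : V) : Prop where
  subset : T ⊆ s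
  left_notMem : a ∉ T
  right_notMem : b ∉ T
  not_reachableIn : ¬ReachableIn H (↑s \ ↑T) a b
  reachableIn_erase : ∀ t ∈ T, ReachableIn H (↑s \ ↑(T.erase t)) a b

lemma exists_isMinimalSeparator (s : Finset V) {a b : V} (hab : a ≠ b) (hnadj : ¬H.Adj a b) :
    ∃ T, IsMinimalSeparator H s T a b := by
  classical
  let cand := ((s.erase a).erase b).powerset.filter fun T : Finset V => ¬ReachableIn H (↑s \ ↑T) a b
  have hfull : (s.erase a).erase b ∈ cand := by
    refine Finset.mem_filter.mpr ⟨Finset.mem_powerset_self _, fun ⟨p, hp⟩ => ?_⟩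
    refine not_reachableIn_pair hab hnadj ⟨p, fun z hz => ?_⟩
    have := hp z hz
    simp only [Finset.coe_erase, Set.mem_sdiff, Set.mem_singleton_iff] at this
    grind
  obtain ⟨T, hT, hmin⟩ := cand.exists_min_image Finset.card ⟨_, hfull⟩
  obtain ⟨hTs, hsep⟩ := Finset.mem_filter.mp hT
  have hTs := Finset.mem_powerset.mp hTs
  refine ⟨T, (hTs.trans (Finset.erase_subset _ _)).trans (Finset.erase_subset _ _),
    fun h => ?_, fun h => ?_, hsep, fun t ht => ?_⟩
  · simpa using hTs h
  · simpa using hTs h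
  · by_contra h
    have := hmin _ (Finset.mem_filter.mpr
      ⟨Finset.mem_powerset.mpr ((Finset.erase_subset _ _).trans hTs), h⟩)
    have := Finset.card_erase_lt_of_mem ht
    omega

namespace IsMinimalSeparator

variable {s T : Finset V} {a b : V}

lemma symm (hT : IsMinimalSeparator H s T a b) : IsMinimalSeparator H s T b a :=
  ⟨hT.subset, hT.right_notMem, hT.left_notMem, fun h => hT.not_reachableIn h.symm,
    fun t ht => (hT.reachableIn_erase t ht).symm⟩

lemma ne_and_not_adj (hT : IsMinimalSeparator H s T a b) {x y : V}
    (hx : ReachableIn H (↑s \ ↑T) a x) (hy : ReachableIn H (↑s \ ↑T) b y) : x ≠ y ∧ ¬H.Adj x y := by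
  refine ⟨fun h => hT.not_reachableIn (hx.trans (h ▸ hy.symm)), fun h => ?_⟩
  exact hT.not_reachableIn (((hx.adj h hy.mem_right)).trans hy.symm)

/-- A walk from `a` to `b` avoiding `T` except at `t` has to leave the component of `a`
through `t`. -/
lemma exists_adj (hT : IsMinimalSeparator H s T a b) {t : V} (ht : t ∈ T) :
    ∃ x, ReachableIn H (↑s \ ↑T) a x ∧ H.Adj x t := by
  classical
  obtain ⟨p, hp⟩ := hT.reachableIn_erase t ht
  have ha : a ∈ (↑s \ ↑T : Set V) := ⟨(hp a p.start_mem_support).1, hT.left_notMem⟩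
  obtain ⟨d, hd, hd₁, hd₂⟩ := p.exists_boundary_dart {x | ReachableIn H (↑s \ ↑T) a x}
    (.refl ha) hT.not_reachableIn
  have hdt : d.toProd.2 = t := by
    by_contra hne
    have := hp _ (p.dart_snd_mem_support_of_mem_darts hd)
    exact hd₂ (hd₁.adj d.adj ⟨this.1, fun h => this.2 (Finset.mem_erase.mpr ⟨hne, h⟩)⟩)
  exact ⟨_, hd₁, hdt ▸ d.adj⟩

lemma exists_walk (hT : IsMinimalSeparator H s T a b) {t₁ t₂ : V} (ht₁ : t₁ ∈ T)
    (ht₂ : t₂ ∈ T) : ∃ p : H.Walk t₁ t₂,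
      ∀ z ∈ p.support, z = t₁ ∨ z = t₂ ∨ ReachableIn H (↑s \ ↑T) a z := by
  obtain ⟨x₁, hx₁, h₁⟩ := hT.exists_adj ht₁
  obtain ⟨x₂, hx₂, h₂⟩ := hT.exists_adj ht₂
  obtain ⟨q, hq⟩ := hx₁.symm.trans hx₂
  refine ⟨cons h₁.symm (q.concat h₂), fun z hz => ?_⟩
  simp only [support_cons, support_concat, List.mem_cons, List.mem_append, List.not_mem_nil,
    or_false] at hz
  rcases hz with rfl | hz | rfl
  · exact .inl rfl
  · exact .inr (.inr (hx₁.trans (.of_mem_support hq hz)))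
  · exact .inr (.inl rfl)

/-- Two non-adjacent vertices of a minimal separator would be joined by chordless paths through
the components of `a` and of `b`, forming a hole. -/
lemma isClique (hH : IsChordalGraph H) (hT : IsMinimalSeparator H s T a b) :
    H.IsClique (T : Set V) := by
  intro t₁ ht₁ t₂ ht₂ hne
  by_contra hadj
  obtain ⟨p, hp⟩ := hT.exists_walk ht₁ ht₂
  obtain ⟨q, hq⟩ := hT.symm.exists_walk ht₂ ht₁
  obtain ⟨P, hP, hPc, hPs⟩ := p.exists_isPath_isChordless
  obtain ⟨Q, hQ, hQc, hQs⟩ := q.exists_isPath_isChordless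
  refine hH _ _ (isHole_append hP hQ hPc hQc (fun z hz => hp z (hPs hz)) (fun z hz => ?_)
    (Set.disjoint_left.mpr fun z ha hb => (hT.ne_and_not_adj ha hb).1 rfl)
    (fun u hu w hw => (hT.ne_and_not_adj hu hw).2) hne hadj)
  rcases hq z (hQs hz) with h | h | h
  exacts [.inr (.inl h), .inl h, .inr (.inr h)]

lemma exists_isSimplicialIn (hH : IsChordalGraph H) (hT : IsMinimalSeparator H s T a b)
    (ha : a ∈ s) (hb : b ∈ s)
    (ih : ∀ s' ⊂ s, ∀ K : Finset V, H.IsClique (K : Set V) → K ⊂ s' →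
      ∃ v ∈ s' \ K, IsSimplicialIn H s' v)
    {K : Finset V} (hK : ∀ z ∈ K, ¬ReachableIn H (↑s \ ↑T) a z) :
    ∃ v ∈ s \ K, IsSimplicialIn H s v := by
  classical
  let A := s.filter (ReachableIn H (↑s \ ↑T) a)
  have hA : ∀ {z}, z ∈ A ↔ ReachableIn H (↑s \ ↑T) a z := fun {z} =>
    ⟨fun h => (Finset.mem_filter.mp h).2, fun h => Finset.mem_filter.mpr ⟨h.mem_right.1, h⟩⟩
  have haA : a ∈ A := hA.mpr (.refl ⟨ha, hT.left_notMem⟩)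
  have hsub : A ∪ T ⊂ s := by
    refine Finset.ssubset_iff_of_subset (Finset.union_subset (Finset.filter_subset _ _) hT.subset)
      |>.mpr ⟨b, hb, fun h => ?_⟩
    rcases Finset.mem_union.mp h with h | h
    exacts [hT.not_reachableIn (hA.mp h), hT.right_notMem h]
  have hTsub : T ⊂ A ∪ T := Finset.ssubset_iff_of_subset Finset.subset_union_right
    |>.mpr ⟨a, Finset.mem_union_left _ haA, hT.left_notMem⟩
  obtain ⟨v, hv, hsimp⟩ := ih _ hsub T (hT.isClique hH) hTsub
  obtain ⟨hvAT, hvT⟩ := Finset.mem_sdiff.mp hv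
  have hvA : v ∈ A := (Finset.mem_union.mp hvAT).resolve_right hvT
  refine ⟨v, Finset.mem_sdiff.mpr ⟨Finset.filter_subset _ _ hvA, fun h => hK v h (hA.mp hvA)⟩,
    hsimp.subset ?_⟩
  rintro y ⟨hvy, hys⟩
  refine ⟨hvy, ?_⟩
  by_cases hyT : y ∈ T
  · simp [hyT]
  · exact Finset.mem_coe.mpr (Finset.mem_union_left _ (hA.mpr ((hA.mp hvA).adj hvy ⟨hys, hyT⟩)))

end IsMinimalSeparator

/-- Dirac's lemma. If `s` is not a clique, split it along a minimal separator `T` of two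
non-adjacent vertices; `T` is a clique, and a simplicial vertex of the side of `T` avoiding `K`,
found by induction in that side together with `T`, is simplicial in `s`. -/
theorem exists_isSimplicialIn_sdiff (hH : IsChordalGraph H) (s K : Finset V)
    (hK : H.IsClique (K : Set V)) (hKs : K ⊂ s) : ∃ v ∈ s \ K, IsSimplicialIn H s v := by
  induction s using Finset.strongInduction generalizing K with
  | H s ih =>
  by_cases hs : H.IsClique (s : Set V)
  · obtain ⟨v, hv⟩ := Finset.sdiff_nonempty.mpr hKs.not_subset
    exact ⟨v, hv, hs.subset Set.inter_subset_right⟩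
  obtain ⟨a, ha, b, hb, hab, hnadj⟩ : ∃ a ∈ s, ∃ b ∈ s, a ≠ b ∧ ¬H.Adj a b := by
    simpa [isClique_iff, Set.Pairwise] using hs
  obtain ⟨T, hT⟩ := exists_isMinimalSeparator (H := H) s hab hnadj
  have hside : (∀ z ∈ K, ¬ReachableIn H (↑s \ ↑T) a z) ∨
      ∀ z ∈ K, ¬ReachableIn H (↑s \ ↑T) b z := by
    by_contra! ⟨⟨x, hx, hax⟩, ⟨y, hy, hby⟩⟩
    have := hT.ne_and_not_adj hax hby
    exact this.2 (hK hx hy this.1)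
  rcases hside with h | h
  · exact hT.exists_isSimplicialIn hH ha hb ih h
  · exact hT.symm.exists_isSimplicialIn hH hb ha ih h

end Simplicial

/-- Roberts' construction: each clique `Q i` of an edge clique cover sends arcs to its own prey,
and a rank decreasing along all arcs makes the digraph acyclic. -/
theorem competitionNumber_le_of_cliqueCover {V ι : Type*} {G : SimpleGraph V} {k : ℕ}
    (Q : ι → Set V) (hQ : ∀ i, G.IsClique (Q i))
    (hcover : ∀ x y, G.Adj x y → ∃ i, x ∈ Q i ∧ y ∈ Q i)
    (prey : ι → V ⊕ Fin k) (hprey : Function.Injective prey)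
    (rank : V ⊕ Fin k → ℕ) (hrank : ∀ i, ∀ x ∈ Q i, rank (prey i) < rank (.inl x)) :
    competitionNumber G ≤ k := by
  apply Nat.sInf_le
  let D : V ⊕ Fin k → V ⊕ Fin k → Prop := fun u w => ∃ i, (∃ x ∈ Q i, u = .inl x) ∧ w = prey i
  have hD : ∀ {u w}, Relation.TransGen D u w → rank w < rank u := by
    intro u w h
    induction h with
    | single h => obtain ⟨i, ⟨x, hx, rfl⟩, rfl⟩ := h; exact hrank i x hx
    | tail _ h ih => obtain ⟨i, ⟨x, hx, rfl⟩, rfl⟩ := h; exact (hrank i x hx).trans ih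
  refine ⟨D, fun a ha => (hD ha).false, fun u w => ?_⟩
  rw [addIsolated, fromRel_adj]
  constructor
  · rintro ⟨huw, ⟨a, b, rfl, rfl, hab⟩ | ⟨a, b, rfl, rfl, hab⟩⟩
    · obtain ⟨i, ha, hb⟩ := hcover a b hab
      exact ⟨huw, prey i, ⟨i, ⟨a, ha, rfl⟩, rfl⟩, ⟨i, ⟨b, hb, rfl⟩, rfl⟩⟩
    · obtain ⟨i, ha, hb⟩ := hcover a b hab
      exact ⟨huw, prey i, ⟨i, ⟨b, hb, rfl⟩, rfl⟩, ⟨i, ⟨a, ha, rfl⟩, rfl⟩⟩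
  · rintro ⟨huw, _, ⟨i, ⟨x, hx, rfl⟩, rfl⟩, ⟨j, ⟨y, hy, rfl⟩, hij⟩⟩
    obtain rfl := hprey hij
    exact ⟨huw, .inl ⟨x, y, rfl, rfl, hQ i hx hy fun h => huw (h ▸ rfl)⟩⟩

section EliminationOrder

variable {V : Type*} {H : SimpleGraph V}

def IsPerfectEliminationOrder (H : SimpleGraph V) (l : List V) : Prop :=
  ∀ i (hi : i < l.length), H.IsClique {w | w ∈ l.drop (i + 1) ∧ H.Adj l[i] w}

lemma IsPerfectEliminationOrder.cons {v : V} {l : List V}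
    (hv : H.IsClique {w | w ∈ l ∧ H.Adj v w}) (hl : IsPerfectEliminationOrder H l) :
    IsPerfectEliminationOrder H (v :: l) := by
  rintro (_ | i) hi
  · simpa using hv
  · simpa using hl i (by simpa using hi)

theorem exists_isPerfectEliminationOrder [DecidableEq V] (hH : IsChordalGraph H)
    (s : Finset V) :
    ∃ l : List V, l.Nodup ∧ (∀ v, v ∈ l ↔ v ∈ s) ∧ IsPerfectEliminationOrder H l := by
  induction s using Finset.strongInduction with
  | H s ih =>
  rcases s.eq_empty_or_nonempty with rfl | hs
  · exact ⟨[], List.nodup_nil, by simp, fun i hi => absurd hi (by simp)⟩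
  obtain ⟨v, hv, hsimp⟩ :=
    exists_isSimplicialIn_sdiff hH s ∅ (by simp) (Finset.empty_ssubset.mpr hs)
  rw [Finset.sdiff_empty] at hv
  obtain ⟨l, hnd, hl, hpeo⟩ := ih _ (Finset.erase_ssubset hv)
  refine ⟨v :: l, List.nodup_cons.mpr ⟨by simp [hl], hnd⟩, fun w => ?_,
    hpeo.cons (hsimp.subset fun w hw => ?_)⟩
  · rw [List.mem_cons, hl, Finset.mem_erase]
    by_cases hw : w = v <;> simp [hw, hv]
  · exact ⟨hw.2, Finset.mem_coe.mpr (Finset.mem_of_mem_erase ((hl w).mp hw.1))⟩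

def elimClique (H : SimpleGraph V) (l : List V) (i : Fin l.length) : Set V :=
  insert l[i] {w | w ∈ l.drop (i + 1) ∧ H.Adj l[i] w}

lemma IsPerfectEliminationOrder.isClique_elimClique {l : List V}
    (hl : IsPerfectEliminationOrder H l) (i : Fin l.length) : H.IsClique (elimClique H l i) :=
  isClique_insert.mpr ⟨hl i i.2, fun _ hw _ => hw.2⟩

lemma exists_mem_elimClique {l : List V} (hl : ∀ v, v ∈ l) {x y : V} (hxy : H.Adj x y) :
    ∃ i, x ∈ elimClique H l i ∧ y ∈ elimClique H l i := by
  obtain ⟨i, hi, rfl⟩ := List.mem_iff_getElem.mp (hl x)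
  obtain ⟨j, hj, rfl⟩ := List.mem_iff_getElem.mp (hl y)
  rcases lt_trichotomy i j with h | rfl | h
  · exact ⟨⟨i, hi⟩, Set.mem_insert _ _, .inr ⟨List.getElem_mem_drop h hj, hxy⟩⟩
  · exact absurd rfl hxy.ne
  · exact ⟨⟨j, hj⟩, .inr ⟨List.getElem_mem_drop h hi, hxy.symm⟩, Set.mem_insert _ _⟩

lemma le_idxOf_of_mem_elimClique [DecidableEq V] {l : List V} (hnd : l.Nodup)
    {i : Fin l.length} {x : V} (hx : x ∈ elimClique H l i) : (i : ℕ) ≤ l.idxOf x := by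
  rcases hx with rfl | hx
  · exact (hnd.idxOf_getElem _ _).ge
  · exact (Nat.le_succ _).trans (hnd.le_idxOf_of_mem_drop hx.1)

end EliminationOrder

theorem competitionNumber_le_ncard_add_one {V : Type*} [Finite V] {G : SimpleGraph V}
    {F : Set (Sym2 V)} (hF : F ⊆ G.edgeSet) (hchordal : IsChordalGraph (G.deleteEdges F)) :
    competitionNumber G ≤ F.ncard + 1 := by
  classical
  have := Fintype.ofFinite V
  obtain ⟨l, hnd, hl, hpeo⟩ := exists_isPerfectEliminationOrder hchordal Finset.univ
  replace hl : ∀ v, v ∈ l := by simpa using hl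
  let eF : F ≃ Fin F.ncard := (Finite.equivFin F).trans (finCongr (Nat.card_coe_set_eq F))
  let prey : Fin l.length → V ⊕ Fin (F.ncard + 1) := fun i =>
    if h : (i : ℕ) = 0 then .inr 0 else .inl (l[(i : ℕ) - 1]'(by omega))
  let rank : V ⊕ Fin (F.ncard + 1) → ℕ := Sum.elim (fun v => l.idxOf v + 1) 0
  have hrank : ∀ i, rank (prey i) = i := by
    intro i
    by_cases h : (i : ℕ) = 0
    · simp [prey, rank, h]
    · simp [prey, rank, h, hnd.idxOf_getElem]
      omega
  refine competitionNumber_le_of_cliqueCover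
    (Sum.elim (elimClique (G.deleteEdges F) l) fun e => {x | x ∈ e.1}) ?_ ?_
    (Sum.elim prey fun e => .inr (eF e).succ) ?_ rank ?_
  · rintro (i | ⟨e, he⟩)
    · exact (hpeo.isClique_elimClique i).mono (G.deleteEdges_le F)
    · intro x hx y hy hxy
      have he' : e = s(x, y) := (Sym2.mem_and_mem_iff hxy).mp ⟨hx, hy⟩
      exact (he' ▸ hF he : s(x, y) ∈ G.edgeSet)
  · intro x y hxy
    by_cases he : s(x, y) ∈ F
    · exact ⟨.inr ⟨_, he⟩, Sym2.mem_mk_left x y, Sym2.mem_mk_right x y⟩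
    · obtain ⟨i, hx, hy⟩ := exists_mem_elimClique hl (deleteEdges_adj.mpr ⟨hxy, he⟩)
      exact ⟨.inl i, hx, hy⟩
  · refine Function.Injective.sumElim (fun i j h => Fin.ext ?_)
      (Sum.inr_injective.comp ((Fin.succ_injective _).comp eF.injective)) ?_
    · simpa [hrank] using congrArg rank h
    · intro i e
      by_cases h : (i : ℕ) = 0 <;> simp [prey, h, (Fin.succ_ne_zero _).symm]
  · rintro (i | e) x hx
    · rw [Sum.elim_inl, hrank]
      exact Nat.lt_succ_of_le (le_idxOf_of_mem_elimClique hnd hx)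
    · simp [rank]

open SimpleGraph.Walk in
theorem isChordalGraph_deleteEdges {V : Type*} {G : SimpleGraph V} {F : Set (Sym2 V)}
    (hunique : ∀ f ∈ F, ∀ E₁ ∈ inducedCycleEdgeSets G, ∀ E₂ ∈ inducedCycleEdgeSets G,
      f ∈ E₁ → f ∈ E₂ → E₁ = E₂)
    (hmeet : ∀ E ∈ holeEdgeSets G, ∃ f ∈ F, f ∈ E) :
    IsChordalGraph (G.deleteEdges F) := by
  rintro v C ⟨hC, hlen, hind⟩
  set C' := C.mapLe (G.deleteEdges_le F)
  have hC' : C'.IsCycle := (isCycle_mapLe _).mpr hC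
  by_cases hchordless :
      ∀ x y, x ∈ C'.support → y ∈ C'.support → G.Adj x y → s(x, y) ∈ C'.edges
  · obtain ⟨f, hf, hfC⟩ := hmeet _ ⟨v, C', ⟨hC', by simpa [C'] using hlen, hchordless⟩, rfl⟩
    have := C.edges_subset_edgeSet (by simpa [C'] using hfC)
    exact (edgeSet_deleteEdges F ▸ this).2 hf
  · push Not at hchordless
    obtain ⟨x, y, hx, hy, hxy, hnot⟩ := hchordless
    have hF : s(x, y) ∈ F := by
      by_contra h
      refine hnot ?_
      simpa [C'] using hind x y (by simpa [C'] using hx) (by simpa [C'] using hy)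
        (deleteEdges_adj.mpr ⟨hxy, h⟩)
    obtain ⟨Z₁, Z₂, hZ₁, hZ₂, h₁, h₂, e, he₁, he₂⟩ :=
      hC'.exists_isInducedCycle_of_chord hx hy hxy hnot
    have := hunique _ hF _ ⟨x, Z₁, hZ₁, rfl⟩ _ ⟨x, Z₂, hZ₂, rfl⟩ h₁ h₂
    exact he₂ (this ▸ he₁ : e ∈ {e | e ∈ Z₂.edges})

theorem numHoles_le_holeDim {V : Type*} [Finite V] (G : SimpleGraph V)
    (hpriv : ∀ E ∈ holeEdgeSets G, ∃ e ∈ E, ∀ E' ∈ holeEdgeSets G, E' ≠ E → e ∉ E') :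
    numHoles G ≤ holeDim G := by
  classical
  choose ec hec hpriv using hpriv
  have hmem : ∀ E E' : holeEdgeSets G, ec E E.2 ∈ E'.1 ↔ E = E' := fun E E' =>
    ⟨fun h => (Subtype.ext (not_imp_not.mp (hpriv E E.2 E' E'.2) h)).symm, (· ▸ hec E E.2)⟩
  let χ : holeEdgeSets G → holeSpace G := fun E =>
    ⟨fun e => if (e : Sym2 V) ∈ E.1 then 1 else 0, by
      obtain ⟨_, ⟨v, w, hw, hE⟩⟩ := E
      exact Submodule.subset_span ⟨v, w, hw, by ext; simp [cycleVec, hE]⟩⟩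
  let c : holeEdgeSets G → G.edgeSet := fun E =>
    ⟨ec E E.2, by
      obtain ⟨E, ⟨v, w, hw, rfl⟩⟩ := E
      exact w.edges_subset_edgeSet (hec _ ⟨v, w, hw, rfl⟩)⟩
  have hχ : LinearIndependent (ZMod 2) χ := by
    refine LinearIndependent.of_comp
      (LinearMap.funLeft (ZMod 2) (ZMod 2) c ∘ₗ (holeSpace G).subtype) ?_
    convert (Pi.basisFun (ZMod 2) (holeEdgeSets G)).linearIndependent with E
    ext E'
    simp [χ, c, LinearMap.funLeft_apply, Pi.single_apply, hmem, eq_comm]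
  have := Fintype.ofFinite (holeEdgeSets G)
  calc numHoles G = Fintype.card (holeEdgeSets G) := by
        rw [numHoles, ← Nat.card_coe_set_eq, Nat.card_eq_fintype_card]
    _ ≤ holeDim G := hχ.fintype_card_le_finrank

theorem stmt16_general {V : Type*} [Fintype V] (G : SimpleGraph V)
    (h : ∀ E ∈ holeEdgeSets G, ∃ e ∈ E,
      ∀ E' ∈ inducedCycleEdgeSets G, E' ≠ E → e ∉ E') :
    competitionNumber G ≤ holeDim G + 1 := by
  have hholes : holeEdgeSets G ⊆ inducedCycleEdgeSets G := by
    rintro _ ⟨v, w, hw, rfl⟩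
    exact ⟨v, w, ⟨hw.1, hw.2.2⟩, rfl⟩
  choose ec hec hpriv using h
  let F := Set.range fun E : holeEdgeSets G => ec E E.2
  have hF : F ⊆ G.edgeSet := by
    rintro _ ⟨⟨E, v, w, hw, rfl⟩, rfl⟩
    exact w.edges_subset_edgeSet (hec _ ⟨v, w, hw, rfl⟩)
  have hunique : ∀ f ∈ F, ∀ E₁ ∈ inducedCycleEdgeSets G, ∀ E₂ ∈ inducedCycleEdgeSets G,
      f ∈ E₁ → f ∈ E₂ → E₁ = E₂ := by
    rintro _ ⟨⟨E, hE⟩, rfl⟩ E₁ h₁ E₂ h₂ hf₁ hf₂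
    exact (not_imp_not.mp (hpriv E hE E₁ h₁) hf₁).trans
      (not_imp_not.mp (hpriv E hE E₂ h₂) hf₂).symm
  have hchordal : IsChordalGraph (G.deleteEdges F) :=
    isChordalGraph_deleteEdges hunique fun E hE => ⟨_, ⟨⟨E, hE⟩, rfl⟩, hec E hE⟩
  calc competitionNumber G ≤ F.ncard + 1 := competitionNumber_le_ncard_add_one hF hchordal
    _ ≤ numHoles G + 1 := by
      rw [← Nat.card_coe_set_eq, numHoles, ← Nat.card_coe_set_eq]
      exact Nat.add_le_add_right (Finite.card_range_le _) 1
    _ ≤ holeDim G + 1 := Nat.add_le_add_right (numHoles_le_holeDim G fun E hE =>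
      ⟨ec E hE, hec E hE, fun E' hE' => hpriv E hE E' (hholes hE')⟩) 1

/-- Let `G` be a connected graph such that for every hole `C` of
`G` there exists an edge `e_C ∈ E(C)` belonging to no other induced cycle of
`G`. Then `k(G) ≤ dim H(G) + 1`. -/
theorem stmt16 {V : Type*} [Fintype V] (G : SimpleGraph V) (hconn : G.Connected)
    (h : ∀ E ∈ holeEdgeSets G, ∃ e ∈ E,
      ∀ E' ∈ inducedCycleEdgeSets G, E' ≠ E → e ∉ E') :
    competitionNumber G ≤ holeDim G + 1 :=
  stmt16_general G h
end

section
/- Let G be a connected graph with a connected spanning subgraph G' that contains all the triangles of G, such that G' is chordal, and let e ∈ E(G) \ E(G'). Then a shortest cycle of G' + e containing the edge e is a hole of G' + e, and its characteristic vector lies in the hole space H(G) of G. -/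
open SimpleGraph

/-!
A chord `xy` of a cycle `C` cuts it into two cycles through `xy`, each shorter than `C`, whose
edge sets have symmetric difference `E(C)`; so over `𝔽₂` the characteristic vector of `C` is the
sum of theirs. A shortest cycle of `G' + e` through `e` has no chord, since one of the two parts
would still contain `e`, and it is not a triangle, since every triangle of `G` lies in `G'`. For
the hole space, induct on the length of a cycle of `G` of length at least 4 without chords in
`G'`: if it has a chord in `G`, that chord lies outside `G'`, so neither part is a triangle, and
both parts again have no chords in `G'`.
-/

namespace SimpleGraph.Walk

variable {V : Type*} {G G' : SimpleGraph V}

theorem IsChordless.notMem_edgeSet_of_isChord_mapLe {K : SimpleGraph V} (hGK : G ≤ K)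
    {u v : V} {w : G.Walk u v} (hw : w.IsChordless) {e : Sym2 V}
    (he : (w.mapLe hGK).IsChord e) : e ∉ G.edgeSet := by
  induction e using Sym2.ind with
  | _ x y =>
    intro hxy
    rw [isChord_sym2Mk, edges_mapLe_eq_edges, support_mapLe_eq_support] at he
    exact he.2.1 (hw.mem_edges he.2.2.1 he.2.2.2 hxy)

theorem mem_edgeSet_of_length_eq_three
    (htri : ∀ x y z : V, G.Adj x y → G.Adj x z → G.Adj y z → G'.Adj x y)
    {v : V} (C : G.Walk v v) (hC : C.length = 3) {e : Sym2 V} (he : e ∈ C.edges) :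
    e ∈ G'.edgeSet := by
  rcases C with _ | ⟨h₁, _ | ⟨h₂, _ | ⟨h₃, _ | ⟨_, _⟩⟩⟩⟩ <;>
    simp only [length_cons, length_nil] at hC <;> try omega
  simp only [edges_cons, edges_nil, List.mem_cons, List.not_mem_nil, or_false] at he
  rcases he with rfl | rfl | rfl
  · exact htri _ _ _ h₁ h₃.symm h₂
  · exact htri _ _ _ h₂ h₁.symm h₃
  · exact htri _ _ _ h₃ h₂.symm h₁

/-- The chord `s(x, y)` of the cycle `C` cuts it into the cycles `C₁` and `C₂`. -/
structure IsChordSplit {v u₁ u₂ : V} (C : G.Walk v v) (x y : V) (C₁ : G.Walk u₁ u₁)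
    (C₂ : G.Walk u₂ u₂) : Prop where
  isCycle_left : C₁.IsCycle
  isCycle_right : C₂.IsCycle
  length_add : C₁.length + C₂.length = C.length + 2
  mem_edges_iff : ∀ e, e ∈ C.edges ↔ Xor (e ∈ C₁.edges) (e ∈ C₂.edges)
  chord_mem_left : s(x, y) ∈ C₁.edges
  chord_mem_right : s(x, y) ∈ C₂.edges
  support_left : C₁.support ⊆ C.support
  support_right : C₂.support ⊆ C.support
  mem_support_inter : ∀ u ∈ C₁.support, u ∈ C₂.support → u = x ∨ u = y

namespace IsChordSplit

variable {v u₁ u₂ x y : V} {C : G.Walk v v} {C₁ : G.Walk u₁ u₁} {C₂ : G.Walk u₂ u₂}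

theorem symm (h : C.IsChordSplit x y C₁ C₂) : C.IsChordSplit x y C₂ C₁ where
  isCycle_left := h.isCycle_right
  isCycle_right := h.isCycle_left
  length_add := by rw [add_comm, h.length_add]
  mem_edges_iff e := by rw [xor_comm, h.mem_edges_iff]
  chord_mem_left := h.chord_mem_right
  chord_mem_right := h.chord_mem_left
  support_left := h.support_right
  support_right := h.support_left
  mem_support_inter u hu₂ hu₁ := h.mem_support_inter u hu₁ hu₂

theorem length_left_lt (h : C.IsChordSplit x y C₁ C₂) : C₁.length < C.length := by
  have := h.isCycle_right.three_le_length
  have := h.length_add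
  omega

theorem isChord_of_isChord_left (h : C.IsChordSplit x y C₁ C₂) {e : Sym2 V}
    (he : C₁.IsChord e) : C.IsChord e := by
  induction e using Sym2.ind with
  | _ c d =>
    obtain ⟨hcd, hnot, hc, hd⟩ := isChord_sym2Mk.mp he
    refine isChord_sym2Mk.mpr ⟨hcd, fun hmem => ?_, h.support_left hc, h.support_left hd⟩
    -- an edge of `C` joining two vertices of `C₁` but missing from `C₁` lies on `C₂`,
    -- so its ends are `x` and `y`
    have hmem₂ : s(c, d) ∈ C₂.edges := (((h.mem_edges_iff _).mp hmem).resolve_left (by tauto)).1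
    have hc' := h.mem_support_inter c hc (C₂.fst_mem_support_of_mem_edges hmem₂)
    have hd' := h.mem_support_inter d hd (C₂.snd_mem_support_of_mem_edges hmem₂)
    apply hnot
    rcases hc' with rfl | rfl <;> rcases hd' with rfl | rfl
    all_goals first | exact absurd rfl hcd.ne | simpa [Sym2.eq_swap] using h.chord_mem_left


theorem of_rotate [DecidableEq V] (hx : x ∈ C.support)
    (h : (C.rotate x hx).IsChordSplit x y C₁ C₂) : C.IsChordSplit x y C₁ C₂ where
  __ := h
  length_add := by rw [h.length_add, length_rotate]
  mem_edges_iff e := by rw [← h.mem_edges_iff, (rotate_edges C x hx).perm.mem_iff]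
  support_left u hu := (mem_support_rotate_iff C x hx).mp (h.support_left hu)
  support_right u hu := (mem_support_rotate_iff C x hx).mp (h.support_right hu)

end IsChordSplit

theorem IsCycle.isChordSplit_takeUntil_dropUntil [DecidableEq V] {x y : V} {C : G.Walk x x}
    (hC : C.IsCycle) (hy : y ∈ C.support) (hxy : G.Adj x y) (hnot : s(x, y) ∉ C.edges) :
    C.IsChordSplit x y (cons hxy.symm (C.takeUntil y hy)) (cons hxy (C.dropUntil y hy)) := by
  set p := C.takeUntil y hy
  set q := C.dropUntil y hy
  have hpq : p.append q = C := take_spec C hy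
  have hedges (e : Sym2 V) : e ∈ C.edges ↔ e ∈ p.edges ∨ e ∈ q.edges := by
    rw [← hpq, edges_append, List.mem_append]
  have htails : (p.support.tail ++ q.support.tail).Nodup := by
    rw [← tail_support_append, hpq]
    exact hC.support_nodup
  have hq : q.IsPath :=
    IsCycle.isPath_of_append_right (not_nil_of_ne hxy.ne) (by rw [hpq]; exact hC)
  exact {
    isCycle_left := (cons_isCycle_iff p hxy.symm).mpr
      ⟨hC.isPath_takeUntil hy, fun h => hnot ((hedges _).mpr (Or.inl (Sym2.eq_swap ▸ h)))⟩
    isCycle_right := (cons_isCycle_iff q hxy).mpr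
      ⟨hq, fun h => hnot ((hedges _).mpr (Or.inr h))⟩
    length_add := by
      rw [length_cons, length_cons, ← hpq, length_append]
      omega
    mem_edges_iff e := by
      have := hC.isTrail.disjoint_edges_takeUntil_dropUntil hy (a := e)
      rw [hedges] at hnot ⊢
      rw [edges_cons, edges_cons, List.mem_cons, List.mem_cons, xor_def]
      by_cases he : e = s(x, y)
      · subst he
        simp_all [Sym2.eq_swap]
      · grind [Sym2.eq_swap]
    chord_mem_left := by simp
    chord_mem_right := by simp
    support_left u hu := by
      rw [support_cons, List.mem_cons] at hu
      exact hu.elim (· ▸ hy) (C.support_takeUntil_subset_support hy ·)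
    support_right u hu := by
      rw [support_cons, List.mem_cons] at hu
      exact hu.elim (· ▸ C.start_mem_support) (C.support_dropUntil_subset_support hy ·)
    mem_support_inter u hu₁ hu₂ := by
      have := List.disjoint_of_nodup_append htails (a := u)
      rw [support_cons, ← cons_tail_support p] at hu₁
      rw [support_cons, ← cons_tail_support q] at hu₂
      grind }

theorem IsCycle.exists_isChordSplit [DecidableEq V] {v x y : V} {C : G.Walk v v}
    (hC : C.IsCycle) (hchord : C.IsChord s(x, y)) :
    ∃ (C₁ : G.Walk y y) (C₂ : G.Walk x x), C.IsChordSplit x y C₁ C₂ := by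
  obtain ⟨hxy, hnot, hx, hy⟩ := isChord_sym2Mk.mp hchord
  have hy' : y ∈ (C.rotate x hx).support := (mem_support_rotate_iff C x hx).mpr hy
  have hnot' : s(x, y) ∉ (C.rotate x hx).edges := by
    rwa [(rotate_edges C x hx).perm.mem_iff]
  exact ⟨_, _, ((hC.rotate hx).isChordSplit_takeUntil_dropUntil hy' hxy hnot').of_rotate hx⟩

end SimpleGraph.Walk

section HoleSpace

open SimpleGraph Walk

variable {V : Type*} {G G' : SimpleGraph V}

theorem isHole_iff {v : V} (w : G.Walk v v) :
    IsHole G w ↔ w.IsCycle ∧ 4 ≤ w.length ∧ w.IsChordless := by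
  rw [IsHole, isChordless_iff_forall_mem_edges]

theorem cycleVec_mapLe {H K : SimpleGraph V} (hHK : H ≤ K) {v : V} (w : H.Walk v v) :
    cycleVec G (w.mapLe hHK) = cycleVec G w := by
  funext e
  simp only [cycleVec]
  rw [edges_mapLe_eq_edges]

theorem cycleVec_eq_add_of_mem_edges_iff_xor {H : SimpleGraph V} {v u₁ u₂ : V}
    {C : H.Walk v v} {C₁ : H.Walk u₁ u₁} {C₂ : H.Walk u₂ u₂}
    (h : ∀ e, e ∈ C.edges ↔ Xor (e ∈ C₁.edges) (e ∈ C₂.edges)) :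
    cycleVec G C = cycleVec G C₁ + cycleVec G C₂ := by
  funext e
  simp only [cycleVec, Pi.add_apply]
  by_cases h₁ : (e : Sym2 V) ∈ C₁.edges <;> by_cases h₂ : (e : Sym2 V) ∈ C₂.edges <;>
    simp [h, xor_def, h₁, h₂, CharTwo.add_self_eq_zero]

theorem cycleVec_mem_holeSpace_of_chords_notMem
    (htri : ∀ x y z : V, G.Adj x y → G.Adj x z → G.Adj y z → G'.Adj x y)
    {v : V} (C : G.Walk v v) (hC : C.IsCycle) (h4 : 4 ≤ C.length)
    (hchords : ∀ e, C.IsChord e → e ∉ G'.edgeSet) : cycleVec G C ∈ holeSpace G := by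
  classical
  induction hn : C.length using Nat.strong_induction_on generalizing v with
  | _ n ih =>
    by_cases hC' : C.IsChordless
    · exact Submodule.subset_span ⟨v, C, (isHole_iff C).mpr ⟨hC, h4, hC'⟩, rfl⟩
    obtain ⟨x, y, he⟩ : ∃ x y, C.IsChord s(x, y) := by
      simpa [IsChordless, Sym2.exists] using hC'
    obtain ⟨C₁, C₂, hs⟩ := hC.exists_isChordSplit he
    have hpart {u₁ u₂ : V} {D₁ : G.Walk u₁ u₁} {D₂ : G.Walk u₂ u₂}
        (hD : C.IsChordSplit x y D₁ D₂) : cycleVec G D₁ ∈ holeSpace G := by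
      have h3 := hD.isCycle_left.three_le_length
      have hD₁ : 4 ≤ D₁.length := by
        by_contra! hlt
        exact hchords _ he
          (mem_edgeSet_of_length_eq_three htri D₁ (by omega) hD.chord_mem_left)
      exact ih _ (hn ▸ hD.length_left_lt) D₁ hD.isCycle_left hD₁
        (fun e he => hchords e (hD.isChord_of_isChord_left he)) rfl
    rw [cycleVec_eq_add_of_mem_edges_iff_xor hs.mem_edges_iff]
    exact add_mem (hpart hs) (hpart hs.symm)

theorem isHole_of_isCycle_of_forall_length_le {K : SimpleGraph V}
    (htri : ∀ x y z : V, K.Adj x y → K.Adj x z → K.Adj y z → G'.Adj x y)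
    {a b : V} (hab' : ¬ G'.Adj a b) {v : V} (w : K.Walk v v) (hw : w.IsCycle)
    (hab : s(a, b) ∈ w.edges)
    (hmin : ∀ (u : V) (w' : K.Walk u u), w'.IsCycle → s(a, b) ∈ w'.edges →
      w.length ≤ w'.length) :
    IsHole K w := by
  classical
  refine (isHole_iff w).mpr ⟨hw, ?_, Sym2.ind fun x y he => ?_⟩
  · by_contra! hlt
    have := hw.three_le_length
    exact hab' (mem_edgeSet_of_length_eq_three htri w (by omega) hab)
  · obtain ⟨C₁, C₂, hs⟩ := hw.exists_isChordSplit he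
    rcases (hs.mem_edges_iff _).mp hab with ⟨hab₁, -⟩ | ⟨hab₂, -⟩
    · exact (hmin _ C₁ hs.isCycle_left hab₁).not_gt hs.length_left_lt
    · exact (hmin _ C₂ hs.isCycle_right hab₂).not_gt hs.symm.length_left_lt

end HoleSpace

open Classical in
theorem stmt18_general {V : Type*} (G G' : SimpleGraph V)
    (hle : G' ≤ G)
    (htri : ∀ x y z : V, G.Adj x y → G.Adj x z → G.Adj y z → G'.Adj x y)
    (a b : V) (hab : G.Adj a b) (hab' : ¬ G'.Adj a b) :
    ∀ (v : V) (w : (G' ⊔ SimpleGraph.fromEdgeSet {s(a, b)}).Walk v v),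
      w.IsCycle → s(a, b) ∈ w.edges →
      (∀ (u : V) (w' : (G' ⊔ SimpleGraph.fromEdgeSet {s(a, b)}).Walk u u),
        w'.IsCycle → s(a, b) ∈ w'.edges → w.length ≤ w'.length) →
      IsHole (G' ⊔ SimpleGraph.fromEdgeSet {s(a, b)}) w ∧
        cycleVec G w ∈ holeSpace G := by
  intro v w hw hab_mem hmin
  have hHG : G' ⊔ fromEdgeSet {s(a, b)} ≤ G :=
    sup_le hle (G.fromEdgeSet_le.mpr (by simp [hab]))
  have hhole : IsHole _ w :=
    isHole_of_isCycle_of_forall_length_le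
      (fun x y z hxy hxz hyz => htri x y z (hHG hxy) (hHG hxz) (hHG hyz)) hab' w hw hab_mem hmin
  obtain ⟨-, h4, hchordless⟩ := (isHole_iff w).mp hhole
  refine ⟨hhole, ?_⟩
  rw [← cycleVec_mapLe hHG]
  exact cycleVec_mem_holeSpace_of_chords_notMem htri _ (hw.mapLe hHG)
    (by rwa [Walk.length_mapLe]) fun e he hG'e =>
      hchordless.notMem_edgeSet_of_isChord_mapLe hHG he (edgeSet_mono le_sup_left hG'e)

open Classical in
/-- Let `G` be a connected graph with a connected spanning
subgraph `G'` containing all the triangles of `G`, with `G'` chordal, and let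
`e = ab ∈ E(G) \ E(G')`.  Then a shortest cycle of `G' + e` containing `e` is a
hole of `G' + e`, and its characteristic vector lies in the hole space of `G`. -/
theorem stmt18 {V : Type*} [Fintype V] (G G' : SimpleGraph V)
    (hG : G.Connected) (hle : G' ≤ G) (hconn' : G'.Connected)
    (htri : ∀ x y z : V, G.Adj x y → G.Adj x z → G.Adj y z → G'.Adj x y)
    (hchordal : IsChordalGraph G')
    (a b : V) (hab : G.Adj a b) (hab' : ¬ G'.Adj a b) :
    ∀ (v : V) (w : (G' ⊔ SimpleGraph.fromEdgeSet {s(a, b)}).Walk v v),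
      w.IsCycle → s(a, b) ∈ w.edges →
      (∀ (u : V) (w' : (G' ⊔ SimpleGraph.fromEdgeSet {s(a, b)}).Walk u u),
        w'.IsCycle → s(a, b) ∈ w'.edges → w.length ≤ w'.length) →
      IsHole (G' ⊔ SimpleGraph.fromEdgeSet {s(a, b)}) w ∧
        cycleVec G w ∈ holeSpace G :=
  stmt18_general G G' hle htri a b hab hab'
end
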